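/- arXiv:1712.07998 — 6 statements merged into one kernel-verified Lean document; each statement's English description precedes it below -/
import Mathlib

section
/- Let $k\ge 1$ and for each $1\le l\le k$ let $M_l = J_{\lambda_l,r_l}$ be the $r_l\times r_l$ Jordan block with eigenvalue $\lambda_l\in\mathbb{C}$. Let $P\in\mathbb{C}[x_1,\ldots,x_k]$ and fix indices $1\le i_l,j_l\le r_l$ for each $l$. Then the entry of the matrix $P^{\otimes}(M_1,\ldots,M_k)$ at row multi-index $(i_1,\ldots,i_k)$ and column multi-index $(j_1,\ldots,j_k)$ equals $0$ if $i_l > j_l$ for some $l$, and equals $\left[\prod_{l=1}^k \frac{1}{(j_l-i_l)!}\,\partial_l^{\,j_l-i_l}\right]P(\lambda_1,\ldots,\lambda_k)$ if $i_l \le j_l$ for all $l$. -/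
open MvPolynomial

/-- `P^⊗(M₁,…,M_k)` for square matrices: the Kronecker-product evaluation,
indexed by multi-indices. -/
noncomputable def tensorEvalM {k : ℕ} {n : Fin k → ℕ} (P : MvPolynomial (Fin k) ℂ)
    (M : ∀ l, Matrix (Fin (n l)) (Fin (n l)) ℂ) :
    Matrix (∀ l, Fin (n l)) (∀ l, Fin (n l)) ℂ :=
  ∑ α ∈ P.support, P.coeff α • Matrix.of fun i j => ∏ l, (M l ^ α l) (i l) (j l)

/-- The composite partial-derivative operator `∏_l ∂_l^{a l}`. -/
noncomputable def pderivComp {k : ℕ} (a : Fin k → ℕ) :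
    Module.End ℂ (MvPolynomial (Fin k) ℂ) :=
  (List.ofFn fun l : Fin k =>
    (((pderiv l).toLinearMap : Module.End ℂ (MvPolynomial (Fin k) ℂ)) ^ a l)).prod

/-- The `r × r` Jordan block with eigenvalue `lam`. -/
def jordanBlock (lam : ℂ) (r : ℕ) : Matrix (Fin r) (Fin r) ℂ :=
  Matrix.of fun i j => if j = i then lam else if (j : ℕ) = (i : ℕ) + 1 then 1 else 0

lemma key (lam : ℂ) (m e : ℕ) :
    (m.choose (e+1) : ℂ) * lam ^ (m - (e+1)) * lam + (m.choose e : ℂ) * lam ^ (m - e)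
      = ((m+1).choose (e+1) : ℂ) * lam ^ (m + 1 - (e+1)) := by
  rcases le_or_gt (e+1) m with h | h
  · have h1 : m - (e+1) + 1 = m + 1 - (e+1) := by omega
    have h2 : m - e = m + 1 - (e+1) := by omega
    rw [mul_assoc, ← pow_succ, h1, h2, Nat.choose_succ_succ]
    push_cast; ring
  · have hm : m ≤ e := by omega
    rcases eq_or_lt_of_le hm with rfl | h2
    · simp [Nat.choose_eq_zero_of_lt (by omega : m < m+1)]
    · simp [Nat.choose_eq_zero_of_lt (by omega : m < e+1),
            Nat.choose_eq_zero_of_lt h2,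
            Nat.choose_eq_zero_of_lt (by omega : m+1 < e+1)]

lemma jb_pow (lam : ℂ) (r m : ℕ) (i j : Fin r) :
    (jordanBlock lam r ^ m) i j =
      if (i : ℕ) ≤ (j : ℕ) then
        (m.choose ((j : ℕ) - (i : ℕ)) : ℂ) * lam ^ (m - ((j : ℕ) - (i : ℕ)))
      else 0 := by
  induction m generalizing i j with
  | zero =>
      rcases lt_trichotomy (i : ℕ) (j : ℕ) with h | h | h
      · rw [pow_zero, Matrix.one_apply_ne (by simp [Fin.ext_iff]; omega), if_pos h.le,
            Nat.choose_eq_zero_of_lt (by omega)]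
        simp
      · have hij : i = j := Fin.ext h
        subst hij
        simp
      · rw [pow_zero, Matrix.one_apply_ne (by simp [Fin.ext_iff]; omega), if_neg (by omega)]
  | succ m ih =>
      rw [pow_succ, Matrix.mul_apply]
      have hsum : ∀ t : Fin r, (jordanBlock lam r ^ m) i t * jordanBlock lam r t j
          = (if t = j then (jordanBlock lam r ^ m) i t * lam else 0)
            + (if (t : ℕ) + 1 = (j : ℕ) then (jordanBlock lam r ^ m) i t else 0) := by
        intro t
        simp only [jordanBlock, Matrix.of_apply]
        by_cases h1 : j = t
        · subst h1
          rw [if_pos rfl, if_pos rfl, if_neg (by omega), add_zero]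
        · rw [if_neg h1, if_neg (Ne.symm h1)]
          by_cases h2 : (j : ℕ) = (t : ℕ) + 1
          · rw [if_pos h2, if_pos (by omega), zero_add, mul_one]
          · rw [if_neg h2, if_neg (by omega), mul_zero, add_zero]
      rw [Finset.sum_congr rfl (fun t _ => hsum t), Finset.sum_add_distrib,
          Finset.sum_ite_eq' Finset.univ j fun t => (jordanBlock lam r ^ m) i t * lam]
      simp only [Finset.mem_univ, if_true]
      rcases Nat.eq_zero_or_pos (j : ℕ) with hj | hj
      · rw [Finset.sum_eq_zero (fun t _ => if_neg (by omega))]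
        rw [ih i j]
        rcases Nat.eq_zero_or_pos (i : ℕ) with hi | hi
        · rw [if_pos (by omega), if_pos (by omega)]
          simp only [hi, hj, Nat.sub_zero, Nat.zero_sub]
          rw [Nat.choose_zero_right, Nat.choose_zero_right]
          simp [pow_succ]
        · rw [if_neg (by omega), if_neg (by omega)]
          simp
      · set j' : Fin r := ⟨(j : ℕ) - 1, by omega⟩ with hj'
        rw [Finset.sum_eq_single j'
          (fun t _ ht => if_neg (fun hE => ht (Fin.ext (by simp only [hj']; omega))))
          (fun h => absurd (Finset.mem_univ j') h)]
        rw [if_pos (by simp [hj']; omega), ih i j, ih i j']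
        have hj'v : (j' : ℕ) = (j : ℕ) - 1 := rfl
        rcases lt_trichotomy (j : ℕ) (i : ℕ) with h | h | h
        · rw [if_neg (by omega), if_neg (by omega), if_neg (by omega)]
          simp
        · rw [if_pos (by omega), if_neg (by omega), if_pos (by omega)]
          have h0 : (j : ℕ) - (i : ℕ) = 0 := by omega
          rw [h0]
          simp [pow_succ, mul_comm]
        · rw [if_pos (by omega), if_pos (by omega), if_pos (by omega)]
          obtain ⟨e, heq⟩ : ∃ e, (j : ℕ) - (i : ℕ) = e + 1 :=
            ⟨(j : ℕ) - (i : ℕ) - 1, by omega⟩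
          rw [heq, hj'v]
          have h1 : (j : ℕ) - 1 - (i : ℕ) = e := by omega
          rw [h1]
          exact key lam m e

lemma pderiv_pow_monomial {k : ℕ} (l : Fin k) (a : ℕ) (s : Fin k →₀ ℕ) (c : ℂ) :
    (((pderiv l).toLinearMap : Module.End ℂ (MvPolynomial (Fin k) ℂ)) ^ a) (monomial s c)
      = monomial (s - Finsupp.single l a) (c * ((s l).descFactorial a : ℂ)) := by
  induction a with
  | zero => simp
  | succ a ih =>
      rw [pow_succ', Module.End.mul_apply, ih]
      show pderiv l _ = _
      rw [pderiv_monomial]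
      have h1 : (s - Finsupp.single l a) l = s l - a := by
        rw [Finsupp.tsub_apply, Finsupp.single_eq_same]
      rw [h1]
      congr 1
      · rw [tsub_tsub, ← Finsupp.single_add]
      · rw [Nat.descFactorial_succ, Nat.cast_mul]
        ring

lemma prod_pderiv_monomial {k : ℕ} (a : Fin k → ℕ) (L : List (Fin k)) (hL : L.Nodup)
    (s : Fin k →₀ ℕ) (c : ℂ) :
    ((L.map fun l => ((pderiv l).toLinearMap : Module.End ℂ (MvPolynomial (Fin k) ℂ)) ^ a l).prod)
        (monomial s c)
      = monomial (s - (L.map fun l => Finsupp.single l (a l)).sum)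
          (c * ((L.map fun l => ((s l).descFactorial (a l) : ℂ)).prod)) := by
  induction L with
  | nil => simp
  | cons l0 L ihL =>
      obtain ⟨hl0, hLnd⟩ := List.nodup_cons.mp hL
      rw [List.map_cons, List.prod_cons, Module.End.mul_apply, ihL hLnd,
          pderiv_pow_monomial]
      have hS : ((L.map fun l => Finsupp.single l (a l)).sum) l0 = 0 := by
        rw [← Finsupp.applyAddHom_apply, map_list_sum, List.map_map]
        apply List.sum_eq_zero
        intro x hx
        obtain ⟨y, hy, rfl⟩ := List.mem_map.mp hx
        simp only [Function.comp_apply, Finsupp.applyAddHom_apply]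
        exact Finsupp.single_eq_of_ne (fun h : l0 = y => hl0 (h ▸ hy))
      have h1 : (s - (L.map fun l => Finsupp.single l (a l)).sum) l0 = s l0 := by
        rw [Finsupp.tsub_apply, hS, Nat.sub_zero]
      rw [h1]
      congr 1
      · rw [tsub_tsub, List.map_cons, List.sum_cons, add_comm]
      · rw [List.map_cons, List.prod_cons]
        ring

lemma pderivComp_monomial {k : ℕ} (a : Fin k → ℕ) (s : Fin k →₀ ℕ) (c : ℂ) :
    pderivComp a (monomial s c)
      = monomial (s - Finsupp.equivFunOnFinite.symm a)
          (c * ∏ l, ((s l).descFactorial (a l) : ℂ)) := by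
  rw [pderivComp, List.ofFn_eq_map, prod_pderiv_monomial a _ (List.nodup_finRange k)]
  have hsum : ((List.finRange k).map fun l => Finsupp.single l (a l)).sum
      = Finsupp.equivFunOnFinite.symm a := by
    ext l'
    rw [← Finsupp.applyAddHom_apply, map_list_sum, List.map_map, ← Fin.sum_univ_def]
    simp [Finsupp.single_apply]
  rw [hsum, Fin.prod_univ_def]

lemma eval_pderivComp_monomial {k : ℕ} (a : Fin k → ℕ) (lam : Fin k → ℂ)
    (s : Fin k →₀ ℕ) (c : ℂ) :
    eval lam (pderivComp a (monomial s c))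
      = c * (∏ l, ((s l).descFactorial (a l) : ℂ)) * ∏ l, lam l ^ (s l - a l) := by
  rw [pderivComp_monomial, eval_monomial,
      Finsupp.prod_fintype _ _ (fun l => pow_zero _)]
  have h : ∀ l, (s - Finsupp.equivFunOnFinite.symm a) l = s l - a l := fun l => by
    rw [Finsupp.tsub_apply]; rfl
  simp [h, mul_assoc]

theorem stmt1 (k : ℕ) (hk : 1 ≤ k) (r : Fin k → ℕ) (lam : Fin k → ℂ)
    (P : MvPolynomial (Fin k) ℂ) (i j : ∀ l, Fin (r l)) :
    ((∃ l, (j l : ℕ) < (i l : ℕ)) →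
      tensorEvalM (n := r) P (fun l => jordanBlock (lam l) (r l)) i j = 0) ∧
    ((∀ l, (i l : ℕ) ≤ (j l : ℕ)) →
      tensorEvalM (n := r) P (fun l => jordanBlock (lam l) (r l)) i j =
        (∏ l, (((j l : ℕ) - (i l : ℕ)).factorial : ℂ))⁻¹ *
          MvPolynomial.eval lam (pderivComp (fun l => (j l : ℕ) - (i l : ℕ)) P)) := by
  constructor
  · rintro ⟨l0, hl0⟩
    rw [tensorEvalM, Matrix.sum_apply]
    apply Finset.sum_eq_zero
    intro α _
    simp only [Matrix.smul_apply, Matrix.of_apply, smul_eq_mul]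
    rw [Finset.prod_eq_zero (Finset.mem_univ l0), mul_zero]
    rw [jb_pow, if_neg (by omega)]
  · intro hij
    conv_rhs => rw [← support_sum_monomial_coeff P]
    rw [map_sum, map_sum, Finset.mul_sum, tensorEvalM, Matrix.sum_apply]
    apply Finset.sum_congr rfl
    intro α hα
    rw [eval_pderivComp_monomial]
    simp only [Matrix.smul_apply, Matrix.of_apply, smul_eq_mul]
    have hterm : ∀ l : Fin k, ((jordanBlock (lam l) (r l)) ^ α l) (i l) (j l)
        = ((α l).choose ((j l : ℕ) - (i l : ℕ)) : ℂ)
            * lam l ^ (α l - ((j l : ℕ) - (i l : ℕ))) := fun l => by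
      rw [jb_pow, if_pos (hij l)]
    rw [Finset.prod_congr rfl (fun l _ => hterm l), Finset.prod_mul_distrib]
    have hdesc : (∏ l, ((α l).descFactorial ((j l : ℕ) - (i l : ℕ)) : ℂ))
        = (∏ l, ((((j l : ℕ) - (i l : ℕ)).factorial : ℂ)))
            * ∏ l, ((α l).choose ((j l : ℕ) - (i l : ℕ)) : ℂ) := by
      rw [← Finset.prod_mul_distrib]
      apply Finset.prod_congr rfl
      intro l _
      rw [← Nat.cast_mul, ← Nat.descFactorial_eq_factorial_mul_choose]
    rw [hdesc]
    have hne : (∏ l, ((((j l : ℕ) - (i l : ℕ)).factorial : ℂ))) ≠ 0 := by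
      apply Finset.prod_ne_zero_iff.mpr
      intro l _
      exact_mod_cast ((j l : ℕ) - (i l : ℕ)).factorial_ne_zero
    field_simp
end

section
/- Let $k\ge 1$ and let $M_1,\ldots,M_k$ be endomorphisms of nonzero finite-dimensional complex vector spaces $E_1,\ldots,E_k$. Then for every polynomial $P\in\mathbb{C}[x_1,\ldots,x_k]$, the spectrum of the endomorphism $P^{\otimes}(M_1,\ldots,M_k)$ of $E_1\otimes\cdots\otimes E_k$ equals the set $\{P(\mu_1,\ldots,\mu_k) : \mu_l \text{ is an eigenvalue of } M_l \text{ for each } 1\le l\le k\}$. -/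
open scoped TensorProduct

/-- `P^⊗(M₁,…,M_k) := ∑_α c_α M₁^{α₁} ⊗ ⋯ ⊗ M_k^{α_k}`, an endomorphism of `E₁ ⊗ ⋯ ⊗ E_k`. -/
noncomputable def tensorEval {k : ℕ} {E : Fin k → Type*} [∀ l, AddCommGroup (E l)]
    [∀ l, Module ℂ (E l)] (P : MvPolynomial (Fin k) ℂ) (M : ∀ l, Module.End ℂ (E l)) :
    Module.End ℂ (⨂[ℂ] l, E l) :=
  ∑ α ∈ P.support, P.coeff α • PiTensorProduct.map (fun l => (M l) ^ (α l))

section Helpers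

variable {k : ℕ} {E : Fin k → Type*} [∀ l, AddCommGroup (E l)] [∀ l, Module ℂ (E l)]

open PiTensorProduct

lemma pow_sub_pow_nilpotent {R : Type*} [Ring R] {a b : R} (h : Commute a b)
    (hab : IsNilpotent (a - b)) (n : ℕ) : IsNilpotent (a ^ n - b ^ n) := by
  rw [← h.geom_sum₂_mul n]
  refine Commute.isNilpotent_mul_left ?_ hab
  refine Commute.sum_left _ _ _ fun i _ => ?_
  exact (((Commute.refl a).sub_right h).pow_left i).mul_left
    ((h.symm.sub_right (Commute.refl b)).pow_left _)

lemma map_smul_one_eq (c : Fin k → ℂ) :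
    PiTensorProduct.map (fun l => c l • (1 : Module.End ℂ (E l))) =
      (∏ l, c l) • (1 : Module.End ℂ (⨂[ℂ] l, E l)) := by
  ext x
  simp only [LinearMap.compMultilinearMap_apply, map_tprod, LinearMap.smul_apply,
    Module.End.one_apply]
  exact MultilinearMap.map_smul_univ (PiTensorProduct.tprod ℂ) c x

lemma map_eq_zero_of_slot (f : ∀ l, Module.End ℂ (E l)) (l₀ : Fin k) (h : f l₀ = 0) :
    PiTensorProduct.map f = 0 := by
  ext x
  simp only [LinearMap.compMultilinearMap_apply, map_tprod, LinearMap.zero_apply]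
  exact MultilinearMap.map_coord_zero _ l₀ (by simp [h])

lemma commute_map (f g : ∀ l, Module.End ℂ (E l)) (h : ∀ l, Commute (f l) (g l)) :
    Commute (PiTensorProduct.map f) (PiTensorProduct.map g) := by
  unfold Commute SemiconjBy
  rw [← PiTensorProduct.map_mul, ← PiTensorProduct.map_mul]
  congr 1
  funext l
  exact h l

lemma isNilpotent_map (f : ∀ l, Module.End ℂ (E l)) (l₀ : Fin k) (h : IsNilpotent (f l₀)) :
    IsNilpotent (PiTensorProduct.map f) := by
  obtain ⟨n, hn⟩ := h
  refine ⟨n, ?_⟩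
  rw [← PiTensorProduct.map_pow]
  exact map_eq_zero_of_slot _ l₀ (by simpa using hn)

lemma single_factor_nilpotent (M' : ∀ l, Module.End ℂ (E l)) (μ : Fin k → ℂ)
    (hN : ∀ l, IsNilpotent (M' l - μ l • 1)) (α : Fin k → ℕ) :
    IsNilpotent (PiTensorProduct.map (fun l => M' l ^ α l)
      - (∏ l, μ l ^ α l) • (1 : Module.End ℂ (⨂[ℂ] l, E l))) := by
  classical
  set g : ∀ l, Module.End ℂ (E l) := fun l => (μ l ^ α l) • 1 with hg
  set K : ∀ l, Module.End ℂ (E l) := fun l => M' l ^ α l - g l with hKdef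
  have hK : ∀ l, IsNilpotent (K l) := by
    intro l
    have hc : Commute (M' l) ((μ l) • (1 : Module.End ℂ (E l))) :=
      (Commute.one_right (M' l)).smul_right (μ l)
    have := pow_sub_pow_nilpotent hc (hN l) (α l)
    simpa [hKdef, hg, smul_pow] using this
  have hcomm : ∀ l (s t : Finset (Fin k)),
      Commute (s.piecewise g K l) (t.piecewise g K l) := by
    intro l s t
    have hgK : ∀ x : Module.End ℂ (E l), Commute (g l) x := fun x => by
      simpa [hg] using (Commute.one_left x).smul_left (μ l ^ α l)
    by_cases hs : l ∈ s
    · rw [Finset.piecewise_eq_of_mem _ _ _ hs]; exact hgK _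
    · by_cases ht : l ∈ t
      · rw [Finset.piecewise_eq_of_mem _ _ _ ht]; exact (hgK _).symm
      · rw [Finset.piecewise_eq_of_notMem _ _ _ hs, Finset.piecewise_eq_of_notMem _ _ _ ht]
  have hexp : PiTensorProduct.map (fun l => M' l ^ α l) =
      ∑ s : Finset (Fin k), PiTensorProduct.map (s.piecewise g K) := by
    have h1 : (fun l => M' l ^ α l) = g + K := by
      funext l; simp [hKdef]
    calc PiTensorProduct.map (fun l => M' l ^ α l)
        = PiTensorProduct.mapMultilinear ℂ E E (g + K) := by rw [h1]; rfl
      _ = ∑ s : Finset (Fin k), PiTensorProduct.mapMultilinear ℂ E E (s.piecewise g K) :=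
          MultilinearMap.map_add_univ _ g K
      _ = ∑ s : Finset (Fin k), PiTensorProduct.map (s.piecewise g K) := rfl
  have hmapg : PiTensorProduct.map g = (∏ l, μ l ^ α l) • (1 : Module.End ℂ (⨂[ℂ] l, E l)) :=
    map_smul_one_eq _
  rw [hexp, ← hmapg]
  rw [← Finset.add_sum_erase _ _ (Finset.mem_univ (Finset.univ : Finset (Fin k))),
    Finset.piecewise_univ, add_sub_cancel_left]
  refine Commute.isNilpotent_sum (fun s hs => ?_) (fun s t _ _ => ?_)
  · obtain ⟨l₀, hl₀⟩ : ∃ l₀, l₀ ∉ s := by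
      by_contra hcon
      push_neg at hcon
      exact (Finset.mem_erase.mp hs).1 (Finset.eq_univ_iff_forall.mpr hcon)
    refine isNilpotent_map _ l₀ ?_
    rw [Finset.piecewise_eq_of_notMem _ _ _ hl₀]
    exact hK l₀
  · exact commute_map _ _ fun l => hcomm l s t

lemma tensorEval_sub_nilpotent (M' : ∀ l, Module.End ℂ (E l)) (μ : Fin k → ℂ)
    (hN : ∀ l, IsNilpotent (M' l - μ l • 1)) (P : MvPolynomial (Fin k) ℂ) :
    IsNilpotent (tensorEval P M' - (MvPolynomial.eval μ P) • 1) := by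
  classical
  have heval : (MvPolynomial.eval μ P • (1 : Module.End ℂ (⨂[ℂ] l, E l))) =
      ∑ α ∈ P.support, P.coeff α • ((∏ l, μ l ^ α l) • (1 : Module.End ℂ (⨂[ℂ] l, E l))) := by
    rw [MvPolynomial.eval_eq', Finset.sum_smul]
    simp [mul_smul]
  rw [tensorEval, heval, ← Finset.sum_sub_distrib]
  have hterm : ∀ α : Fin k →₀ ℕ,
      P.coeff α • PiTensorProduct.map (fun l => M' l ^ α l)
        - P.coeff α • ((∏ l, μ l ^ α l) • (1 : Module.End ℂ (⨂[ℂ] l, E l)))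
      = P.coeff α • (PiTensorProduct.map (fun l => M' l ^ α l)
          - (∏ l, μ l ^ α l) • (1 : Module.End ℂ (⨂[ℂ] l, E l))) := by
    intro α; rw [smul_sub]
  simp_rw [hterm]
  refine Commute.isNilpotent_sum (fun α _ => ?_) (fun α β _ _ => ?_)
  · exact (single_factor_nilpotent M' μ hN (fun l => α l)).smul _
  · have hAB : Commute (PiTensorProduct.map (fun l => M' l ^ α l))
        (PiTensorProduct.map (fun l => M' l ^ β l)) :=
      commute_map _ _ fun l => (Commute.refl (M' l)).pow_pow _ _
    have h1 : Commute (PiTensorProduct.map (fun l => M' l ^ α l)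
        - (∏ l, μ l ^ α l) • (1 : Module.End ℂ (⨂[ℂ] l, E l)))
        (PiTensorProduct.map (fun l => M' l ^ β l)
        - (∏ l, μ l ^ β l) • (1 : Module.End ℂ (⨂[ℂ] l, E l))) := by
      have c1 : Commute (PiTensorProduct.map (fun l => M' l ^ α l))
          ((∏ l, μ l ^ β l) • (1 : Module.End ℂ (⨂[ℂ] l, E l))) :=
        (Commute.one_right _).smul_right _
      have c2 : Commute ((∏ l, μ l ^ α l) • (1 : Module.End ℂ (⨂[ℂ] l, E l)))
          (PiTensorProduct.map (fun l => M' l ^ β l)) :=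
        (Commute.one_left _).smul_left _
      have c3 : Commute ((∏ l, μ l ^ α l) • (1 : Module.End ℂ (⨂[ℂ] l, E l)))
          ((∏ l, μ l ^ β l) • (1 : Module.End ℂ (⨂[ℂ] l, E l))) :=
        ((Commute.refl 1).smul_left _).smul_right _
      exact (hAB.sub_right c1).sub_left (c2.sub_right c3)
    exact (h1.smul_left _).smul_right _

lemma comp_pow_intertwine {V W : Type*} [AddCommGroup V] [Module ℂ V] [AddCommGroup W]
    [Module ℂ W] (f : Module.End ℂ V) (g : Module.End ℂ W) (ι : W →ₗ[ℂ] V)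
    (h : f ∘ₗ ι = ι ∘ₗ g) (n : ℕ) : (f ^ n) ∘ₗ ι = ι ∘ₗ (g ^ n) := by
  induction n with
  | zero => simp [pow_zero, Module.End.one_eq_id]
  | succ n ih =>
    rw [pow_succ, pow_succ, Module.End.mul_eq_comp, Module.End.mul_eq_comp,
      LinearMap.comp_assoc, h, ← LinearMap.comp_assoc, ih, LinearMap.comp_assoc]

lemma tensorEval_comp_mapIncl (M : ∀ l, Module.End ℂ (E l)) (P : MvPolynomial (Fin k) ℂ)
    (W : ∀ l, Submodule ℂ (E l)) (hW : ∀ l, Set.MapsTo (M l) (W l) (W l)) :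
    (tensorEval P M) ∘ₗ PiTensorProduct.mapIncl W
      = PiTensorProduct.mapIncl W ∘ₗ tensorEval P (fun l => (M l).restrict (hW l)) := by
  ext x
  simp only [LinearMap.compMultilinearMap_apply, LinearMap.coe_comp, Function.comp_apply,
    PiTensorProduct.mapIncl, map_tprod, tensorEval, LinearMap.sum_apply, LinearMap.smul_apply,
    map_sum, map_smul]
  refine Finset.sum_congr rfl fun α _ => ?_
  refine congrArg (fun z => MvPolynomial.coeff α P • z) ?_
  refine congrArg (fun v => PiTensorProduct.tprod ℂ (s := E) v) (funext fun l => ?_)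
  exact (congrArg Subtype.val (LinearMap.congr_fun (Module.End.pow_restrict (α l) (hW l)) (x l))).symm


lemma key_vanish [∀ l, FiniteDimensional ℂ (E l)] (M : ∀ l, Module.End ℂ (E l))
    (P : MvPolynomial (Fin k) ℂ) (μ : Fin k → ℂ) :
    ∃ n : ℕ, 0 < n ∧ ∀ v : (∀ l, E l), (∀ l, v l ∈ (M l).maxGenEigenspace (μ l)) →
      ((tensorEval P M - (MvPolynomial.eval μ P) • 1) ^ n) (PiTensorProduct.tprod ℂ v) = 0 := by
  classical
  set W := fun l => (M l).maxGenEigenspace (μ l) with hWdef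
  have hW : ∀ l, Set.MapsTo (M l) (W l) (W l) := fun l =>
    Module.End.mapsTo_maxGenEigenspace_of_comm (Commute.refl (M l)) (μ l)
  set M' := fun l => (M l).restrict (hW l) with hM'def
  have hN : ∀ l, IsNilpotent (M' l - μ l • 1) := by
    intro l
    have h0 := Module.End.isNilpotent_restrict_maxGenEigenspace_sub_algebraMap (M l) (μ l)
    have heq : (M l - algebraMap ℂ (Module.End ℂ (E l)) (μ l)).restrict
        (Module.End.mapsTo_maxGenEigenspace_of_comm
          (Algebra.mul_sub_algebraMap_commutes (M l) (μ l)) (μ l)) = M' l - μ l • 1 := by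
      apply LinearMap.ext
      intro x
      apply Subtype.ext
      show (M l - algebraMap ℂ (Module.End ℂ (E l)) (μ l)) (x : E l) = M l (x : E l) - μ l • (x : E l)
      rw [LinearMap.sub_apply, Module.algebraMap_end_apply]
    rwa [heq] at h0
  obtain ⟨m, hm⟩ := tensorEval_sub_nilpotent M' μ hN P
  refine ⟨m + 1, Nat.succ_pos m, fun v hv => ?_⟩
  have hι : (tensorEval P M - MvPolynomial.eval μ P • 1) ∘ₗ PiTensorProduct.mapIncl W
      = PiTensorProduct.mapIncl W ∘ₗ (tensorEval P M' - MvPolynomial.eval μ P • 1) := by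
    rw [LinearMap.sub_comp, LinearMap.comp_sub, tensorEval_comp_mapIncl M P W hW]
    congr 1
    apply LinearMap.ext
    intro x
    simp
  have hcomp := comp_pow_intertwine _ _ _ hι (m + 1)
  have hv' : PiTensorProduct.tprod ℂ v
      = PiTensorProduct.mapIncl W (PiTensorProduct.tprod ℂ (fun l => (⟨v l, hv l⟩ : W l))) := by
    rw [PiTensorProduct.mapIncl, map_tprod]
    rfl
  rw [hv', ← LinearMap.comp_apply, hcomp, LinearMap.comp_apply]
  have hz : (tensorEval P M' - MvPolynomial.eval μ P • 1) ^ (m + 1) = 0 := by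
    rw [pow_succ, hm, zero_mul]
  rw [hz]
  simp

end Helpers


open PiTensorProduct in
theorem stmt7 (k : ℕ) (hk : 1 ≤ k) (E : Fin k → Type*)
    [∀ l, AddCommGroup (E l)] [∀ l, Module ℂ (E l)]
    [∀ l, FiniteDimensional ℂ (E l)] [∀ l, Nontrivial (E l)]
    (M : ∀ l, Module.End ℂ (E l)) (P : MvPolynomial (Fin k) ℂ) :
    spectrum ℂ (tensorEval P M) =
      (fun μ : Fin k → ℂ => MvPolynomial.eval μ P) ''
        {μ : Fin k → ℂ | ∀ l, μ l ∈ spectrum ℂ (M l)} := by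
  classical
  set T := tensorEval P M with hT
  apply Set.Subset.antisymm
  · intro lam hlam
    set Sfin : Finset (Fin k → ℂ) :=
      Fintype.piFinset (fun l => (Module.End.finite_spectrum (M l)).toFinset) with hSfin
    choose n hnpos hkill using key_vanish M P
    set Q : Polynomial ℂ :=
      ∏ ν ∈ Sfin, (Polynomial.X - Polynomial.C (MvPolynomial.eval ν P)) ^ n ν with hQ
    have hQT : Polynomial.aeval T Q = 0 := by
      rw [← LinearMap.ker_eq_top, ← top_le_iff, ← PiTensorProduct.span_tprod_eq_top,
        Submodule.span_le]
      rintro _ ⟨v, rfl⟩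
      simp only [SetLike.mem_coe, LinearMap.mem_ker]
      have hv : ∀ l, v l ∈ ⨆ ν : ℂ, (M l).maxGenEigenspace ν := by
        intro l
        rw [Module.End.iSup_maxGenEigenspace_eq_top]
        exact Submodule.mem_top
      choose w hw hsum using fun l => (Submodule.mem_iSup_iff_exists_finsupp _ _).mp (hv l)
      have hvrw : PiTensorProduct.tprod ℂ v = ∑ r ∈ Fintype.piFinset (fun l => (w l).support),
          PiTensorProduct.tprod ℂ (fun l => w l (r l)) := by
        have hveq : v = fun l => ∑ ν ∈ (w l).support, w l ν := by
          funext l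
          rw [← hsum l]
          rfl
        rw [hveq]
        exact MultilinearMap.map_sum_finset (PiTensorProduct.tprod ℂ) _ _
      rw [hvrw, map_sum]
      refine Finset.sum_eq_zero fun r hr => ?_
      by_cases hz : ∀ l, w l (r l) ≠ 0
      · have hrS : r ∈ Sfin := by
          rw [hSfin, Fintype.mem_piFinset]
          intro l
          rw [Set.Finite.mem_toFinset]
          have hmem := hw l (r l)
          have hev : (M l).HasEigenvalue (r l) := by
            obtain ⟨kk, hkk⟩ := (Module.End.mem_maxGenEigenspace _ _ _).mp hmem
            refine Module.End.hasEigenvalue_of_hasGenEigenvalue (k := kk) ?_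
            rw [Module.End.hasGenEigenvalue_iff]
            refine (Submodule.ne_bot_iff _).mpr ⟨w l (r l), ?_, hz l⟩
            rw [Module.End.mem_genEigenspace_nat]
            exact hkk
          exact hev.mem_spectrum
        have hfact : Q = (∏ ν ∈ Sfin.erase r,
              (Polynomial.X - Polynomial.C (MvPolynomial.eval ν P)) ^ n ν)
            * (Polynomial.X - Polynomial.C (MvPolynomial.eval r P)) ^ n r :=
          (Finset.prod_erase_mul _ _ hrS).symm
        rw [hfact, _root_.map_mul, Module.End.mul_apply]
        have h0 : (Polynomial.aeval T) ((Polynomial.X - Polynomial.C (MvPolynomial.eval r P)) ^ n r)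
            (PiTensorProduct.tprod ℂ (fun l => w l (r l))) = 0 := by
          rw [map_pow, _root_.map_sub, Polynomial.aeval_X, Polynomial.aeval_C]
          have halg : T - algebraMap ℂ (Module.End ℂ (⨂[ℂ] l, E l)) (MvPolynomial.eval r P)
              = T - (MvPolynomial.eval r P) • 1 := by
            rw [Module.algebraMap_end_eq_smul_id]
            rfl
          rw [halg]
          exact hkill r (fun l => w l (r l)) (fun l => hw l (r l))
        rw [h0, map_zero]
      · push_neg at hz
        obtain ⟨l₀, hl₀⟩ := hz
        have h0 : PiTensorProduct.tprod ℂ (fun l => w l (r l)) = 0 :=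
          MultilinearMap.map_coord_zero _ l₀ (by simp [hl₀])
        rw [h0, map_zero]
    have h1 : Polynomial.eval lam Q ∈ spectrum ℂ ((Polynomial.aeval T) Q) :=
      spectrum.subset_polynomial_aeval T Q ⟨lam, hlam, rfl⟩
    rw [hQT] at h1
    have h2 : Polynomial.eval lam Q = 0 := by
      by_contra hne
      have hu : IsUnit (algebraMap ℂ (Module.End ℂ (⨂[ℂ] l, E l)) (Polynomial.eval lam Q) - 0) := by
        rw [sub_zero]
        exact IsUnit.map (algebraMap ℂ _) (isUnit_iff_ne_zero.mpr hne)
      exact spectrum.mem_iff.mp h1 hu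
    rw [Polynomial.eval_prod] at h2
    obtain ⟨μ, hμS, hμ0⟩ := Finset.prod_eq_zero_iff.mp h2
    rw [Polynomial.eval_pow, Polynomial.eval_sub, Polynomial.eval_X, Polynomial.eval_C] at hμ0
    have hlameq : lam = MvPolynomial.eval μ P :=
      sub_eq_zero.mp ((pow_eq_zero_iff (hnpos μ).ne').mp hμ0)
    exact ⟨μ, fun l => (Set.Finite.mem_toFinset _).mp (Fintype.mem_piFinset.mp hμS l), hlameq.symm⟩
  · rintro _ ⟨μ, hμ, rfl⟩
    have hev : ∀ l, ∃ v : E l, (M l).HasEigenvector (μ l) v := fun l =>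
      ((Module.End.hasEigenvalue_iff_mem_spectrum).mpr (hμ l)).exists_hasEigenvector
    choose v hv using hev
    have htp : T (PiTensorProduct.tprod ℂ v)
        = (MvPolynomial.eval μ P) • PiTensorProduct.tprod ℂ v := by
      rw [hT, tensorEval]
      simp only [LinearMap.sum_apply, LinearMap.smul_apply, PiTensorProduct.map_tprod]
      have hmono : ∀ α : Fin k →₀ ℕ,
          (PiTensorProduct.tprod ℂ fun l => ((M l) ^ (α l)) (v l))
            = (∏ l, μ l ^ α l) • PiTensorProduct.tprod ℂ v := by
        intro α
        have hco : (fun l => ((M l) ^ (α l)) (v l)) = fun l => (μ l ^ α l) • v l :=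
          funext fun l => (hv l).pow_apply (α l)
        rw [hco]
        exact MultilinearMap.map_smul_univ (PiTensorProduct.tprod ℂ) _ _
      simp_rw [hmono, smul_smul]
      rw [← Finset.sum_smul, MvPolynomial.eval_eq']
    have hne : PiTensorProduct.tprod ℂ v ≠ 0 := by
      have hgl : ∀ l, ∃ g : E l →ₗ[ℂ] ℂ, g (v l) = 1 := by
        intro l
        have hnz := (hv l).2
        obtain ⟨f, hf⟩ : ∃ f : Module.Dual ℂ (E l), f (v l) ≠ 0 := by
          by_contra hcon
          push_neg at hcon
          exact hnz ((Module.forall_dual_apply_eq_zero_iff ℂ (v l)).mp hcon)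
        exact ⟨(f (v l))⁻¹ • f, by simp [inv_mul_cancel₀ hf]⟩
      choose g hg using hgl
      intro h0
      have hlift := congrArg
        (PiTensorProduct.lift ((MultilinearMap.mkPiAlgebra ℂ (Fin k) ℂ).compLinearMap g)) h0
      rw [map_zero, PiTensorProduct.lift.tprod] at hlift
      simp [MultilinearMap.mkPiAlgebra_apply, hg] at hlift
    exact (Module.End.hasEigenvalue_of_hasEigenvector
      ⟨Module.End.mem_genEigenspace_one.mpr htp, hne⟩).mem_spectrum
end

section
/- Let $k\ge 1$ and let $M_1,\ldots,M_k$ be endomorphisms of nonzero finite-dimensional complex vector spaces $E_1,\ldots,E_k$. For each $l$, let $\lambda_{l1},\ldots,\lambda_{le_l}$ be the distinct eigenvalues of $M_l$ and $r_{lm}$ the multiplicity of $\lambda_{lm}$ as a root of the minimal polynomial of $M_l$. Let $P\in\mathbb{C}[x_1,\ldots,x_k]$ and set $\bar M := P^{\otimes}(M_1,\ldots,M_k)$. Let $V := \{P(\lambda_{1m_1},\ldots,\lambda_{km_k}) : 1\le m_l\le e_l\}$ and for each $\mu\in V$ set $\bar r_\mu := \max\{1+\sum_{l=1}^k (r_{lm_l}-1)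 : P(\lambda_{1m_1},\ldots,\lambda_{km_k})=\mu\}$. Then $\prod_{\mu\in V}(\bar M - \mu\,\mathrm{id})^{\bar r_\mu} = 0$; equivalently, the minimal polynomial of $\bar M$ divides $\prod_{\mu\in V}(X-\mu)^{\bar r_\mu}$. -/
open scoped TensorProduct
open Polynomial

namespace Stmt8Aux

/-! ### Commutative algebra lemmas -/

/-- Taylor-type membership: `P(a) - P(λ)` lies in the ideal generated by the `a l - λ l`. -/
lemma aeval_sub_mem_span {S : Type*} [CommRing S] [Algebra ℂ S] {k : ℕ}
    (a : Fin k → S) (lv : Fin k → ℂ) (P : MvPolynomial (Fin k) ℂ) :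
    MvPolynomial.aeval a P - algebraMap ℂ S (MvPolynomial.eval lv P) ∈
      Ideal.span (Set.range fun l => a l - algebraMap ℂ S (lv l)) := by
  induction P using MvPolynomial.induction_on with
  | C c => simp
  | add p q hp hq =>
      have h : MvPolynomial.aeval a (p + q) - algebraMap ℂ S (MvPolynomial.eval lv (p + q))
          = (MvPolynomial.aeval a p - algebraMap ℂ S (MvPolynomial.eval lv p))
            + (MvPolynomial.aeval a q - algebraMap ℂ S (MvPolynomial.eval lv q)) := by
        simp only [map_add]; ring
      rw [h]
      exact Ideal.add_mem _ hp hq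
  | mul_X p i hp =>
      have h : MvPolynomial.aeval a (p * MvPolynomial.X i)
            - algebraMap ℂ S (MvPolynomial.eval lv (p * MvPolynomial.X i))
          = (MvPolynomial.aeval a p - algebraMap ℂ S (MvPolynomial.eval lv p)) * a i
            + algebraMap ℂ S (MvPolynomial.eval lv p) * (a i - algebraMap ℂ S (lv i)) := by
        simp only [map_mul, MvPolynomial.aeval_X, MvPolynomial.eval_X]; ring
      rw [h]
      exact Ideal.add_mem _ (Ideal.mul_mem_right _ _ hp)
        (Ideal.mul_mem_left _ _ (Ideal.subset_span ⟨i, rfl⟩))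

/-- Commuting nilpotents: a high enough power of an element of the ideal spanned by the `n l`
lands in `I`, provided `n l ^ r l ∈ I`. -/
lemma pow_mem_of_mem_span {S : Type*} [CommRing S] {k : ℕ} (I : Ideal S)
    (n : Fin k → S) (r : Fin k → ℕ) (hn : ∀ l, n l ^ r l ∈ I)
    {z : S} (hz : z ∈ Ideal.span (Set.range n)) {N : ℕ}
    (hN : 1 + ∑ l, (r l - 1) ≤ N) : z ^ N ∈ I := by
  obtain ⟨c, rfl⟩ := (Submodule.mem_span_range_iff_exists_fun _).mp hz
  have key : ∀ s : Finset (Fin k), ∀ N : ℕ, (∑ l ∈ s, (r l - 1)) + 1 ≤ N →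
      (∑ l ∈ s, c l • n l) ^ N ∈ I := by
    intro s
    induction s using Finset.induction_on with
    | empty =>
        intro N hN
        rw [Finset.sum_empty, zero_pow (by omega)]
        exact I.zero_mem
    | @insert i s his ih =>
        intro N hN
        rw [Finset.sum_insert his, add_pow]
        refine Ideal.sum_mem _ fun j hj => ?_
        rcases le_or_gt (r i) j with hij | hij
        · have hpow : n i ^ j = n i ^ (j - r i) * n i ^ r i := by
            rw [← pow_add]; congr 1; omega
          have h1 : (c i • n i) ^ j ∈ I := by
            rw [_root_.smul_pow, hpow]
            exact Submodule.smul_mem _ _ (I.mul_mem_left _ (hn i))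
          exact I.mul_mem_right _ (I.mul_mem_right _ h1)
        · rw [Finset.sum_insert his] at hN
          have h2 : (∑ l ∈ s, c l • n l) ^ (N - j) ∈ I := ih (N - j) (by omega)
          exact I.mul_mem_right _ (I.mul_mem_left _ h2)
  exact key Finset.univ N (by omega)

/-! ### Generalized eigenspace lemmas -/

/-- If `q(μ) ≠ 0` then `q(f)` is injective on the generalized eigenspace of `μ`. -/
lemma eq_zero_of_aeval_eq_zero {V : Type*} [AddCommGroup V] [Module ℂ V]
    (f : Module.End ℂ V) (μ : ℂ) (q : ℂ[X]) (hq : q.eval μ ≠ 0) :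
    ∀ (nn : ℕ) (w : V), ((f - μ • 1) ^ nn) w = 0 → (Polynomial.aeval f) q w = 0 → w = 0 := by
  have hXC : f - μ • 1 = Polynomial.aeval f (X - C μ) := by
    rw [map_sub, Polynomial.aeval_X, Polynomial.aeval_C, Algebra.algebraMap_eq_smul_one]
  intro nn
  induction nn with
  | zero => intro w h0 _; simpa using h0
  | succ nn ih =>
      intro w hw hqw
      have hcomm : Polynomial.aeval f q * (f - μ • 1) = (f - μ • 1) * Polynomial.aeval f q := by
        rw [hXC, ← map_mul, mul_comm, map_mul]
      have hw' : (f - μ • 1) w = 0 := by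
        refine ih ((f - μ • 1) w) ?_ ?_
        · rw [← Module.End.mul_apply, ← pow_succ, hw]
        · rw [← Module.End.mul_apply, hcomm, Module.End.mul_apply, hqw, map_zero]
      obtain ⟨h, hh⟩ : (X - C μ) ∣ (q - C (q.eval μ)) :=
        Polynomial.dvd_iff_isRoot.mpr (by simp [Polynomial.IsRoot])
      have hqdec : q = C (q.eval μ) + h * (X - C μ) := by
        linear_combination hh
      have h0 : (0 : V) = q.eval μ • w := by
        rw [← hqw]
        conv_lhs => rw [hqdec]
        rw [map_add, map_mul, Polynomial.aeval_C, LinearMap.add_apply, Module.End.mul_apply,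
          ← hXC, hw', map_zero, add_zero, Algebra.algebraMap_eq_smul_one, LinearMap.smul_apply,
          Module.End.one_apply]
      rcases smul_eq_zero.mp h0.symm with h | h
      · exact absurd h hq
      · exact h

/-- A generalized eigenvector is killed by `(f - μ)^(root multiplicity of μ in minpoly)`. -/
lemma maxGen_le_ker {V : Type*} [AddCommGroup V] [Module ℂ V] [FiniteDimensional ℂ V]
    (f : Module.End ℂ V) (μ : ℂ) {v : V} (hv : v ∈ f.maxGenEigenspace μ) :
    ((f - μ • 1) ^ ((minpoly ℂ f).rootMultiplicity μ)) v = 0 := by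
  obtain ⟨nn, hnn⟩ := (Module.End.mem_maxGenEigenspace f μ v).mp hv
  have hp0 : minpoly ℂ f ≠ 0 := minpoly.ne_zero (Algebra.IsIntegral.isIntegral (R := ℂ) f)
  obtain ⟨q, hq_eq, hndvd⟩ :=
    (minpoly ℂ f).exists_eq_pow_rootMultiplicity_mul_and_not_dvd hp0 μ
  have hqμ : q.eval μ ≠ 0 := fun h => hndvd (Polynomial.dvd_iff_isRoot.mpr h)
  have hXC : f - μ • 1 = Polynomial.aeval f (X - C μ) := by
    rw [map_sub, Polynomial.aeval_X, Polynomial.aeval_C, Algebra.algebraMap_eq_smul_one]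
  have key : (Polynomial.aeval f) q (((f - μ • 1) ^ ((minpoly ℂ f).rootMultiplicity μ)) v)
      = 0 := by
    have hqp : q * (X - C μ) ^ ((minpoly ℂ f).rootMultiplicity μ) = minpoly ℂ f := by
      conv_rhs => rw [hq_eq]
      ring
    have h3 : Polynomial.aeval f (q * (X - C μ) ^ ((minpoly ℂ f).rootMultiplicity μ)) v = 0 := by
      rw [hqp, minpoly.aeval]
      rfl
    rw [map_mul, map_pow, ← hXC, Module.End.mul_apply] at h3
    exact h3
  have hnil : ((f - μ • 1) ^ nn) (((f - μ • 1) ^ ((minpoly ℂ f).rootMultiplicity μ)) v)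
      = 0 := by
    rw [← Module.End.mul_apply, ← pow_add, add_comm, pow_add, Module.End.mul_apply, hnn, map_zero]
  exact eq_zero_of_aeval_eq_zero f μ q hqμ nn _ hnil key

/-- Decomposition of the space into kernels of `(f - λ m)^(r m)`. -/
lemma iSup_ker_eq_top {V : Type*} [AddCommGroup V] [Module ℂ V] [FiniteDimensional ℂ V]
    (f : Module.End ℂ V) {e : ℕ} (lam : Fin e → ℂ) (hspec : spectrum ℂ f = Set.range lam)
    (r : Fin e → ℕ) (hr : ∀ m, r m = (minpoly ℂ f).rootMultiplicity (lam m)) :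
    ⨆ m, LinearMap.ker ((f - lam m • 1) ^ r m) = ⊤ := by
  rw [eq_top_iff, ← Module.End.iSup_maxGenEigenspace_eq_top f]
  refine iSup_le fun μ => ?_
  by_cases hμ : μ ∈ Set.range lam
  · obtain ⟨m, rfl⟩ := hμ
    refine le_trans ?_ (le_iSup _ m)
    intro v hv
    rw [LinearMap.mem_ker, hr m]
    exact maxGen_le_ker f (lam m) hv
  · have hbot : f.maxGenEigenspace μ = ⊥ := by
      by_contra hb
      have h1 : f.HasGenEigenvalue μ (Module.finrank ℂ V) := by
        unfold Module.End.HasGenEigenvalue Module.End.HasUnifEigenvalue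
        rw [← Module.End.maxGenEigenspace_eq_genEigenspace_finrank]
        exact hb
      have h2 : μ ∈ spectrum ℂ f :=
        (Module.End.hasEigenvalue_of_hasGenEigenvalue h1).mem_spectrum
      rw [hspec] at h2
      exact hμ h2
    rw [hbot]
    exact bot_le

/-! ### Amplified endomorphisms on the tensor product -/

variable {k : ℕ} {E : Fin k → Type*} [∀ l, AddCommGroup (E l)] [∀ l, Module ℂ (E l)]

/-- The endomorphism of `⨂ E` acting as `f` on slot `l` and the identity elsewhere. -/
noncomputable def amp (l : Fin k) (f : Module.End ℂ (E l)) : Module.End ℂ (⨂[ℂ] j, E j) :=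
  PiTensorProduct.map (Function.update (fun j => (1 : Module.End ℂ (E j))) l f)

lemma amp_tprod (l : Fin k) (f : Module.End ℂ (E l)) (x : ∀ j, E j) :
    amp l f (PiTensorProduct.tprod ℂ x) = PiTensorProduct.tprod ℂ (Function.update x l (f (x l))) := by
  rw [amp, PiTensorProduct.map_tprod]
  congr 1
  funext j
  rcases eq_or_ne j l with rfl | h
  · simp
  · simp [Function.update_of_ne h]

lemma amp_one (l : Fin k) : amp (E := E) l 1 = 1 := by
  refine PiTensorProduct.ext (MultilinearMap.ext fun x => ?_)
  simp only [LinearMap.compMultilinearMap_apply, amp_tprod, Module.End.one_apply,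
    Module.End.one_apply, Function.update_eq_self]

lemma amp_add (l : Fin k) (f g : Module.End ℂ (E l)) :
    amp l (f + g) = amp l f + amp l g := by
  refine PiTensorProduct.ext (MultilinearMap.ext fun x => ?_)
  simp only [LinearMap.compMultilinearMap_apply, amp_tprod, LinearMap.add_apply]
  exact MultilinearMap.map_update_add _ _ _ _ _

lemma amp_smul (l : Fin k) (c : ℂ) (f : Module.End ℂ (E l)) :
    amp l (c • f) = c • amp l f := by
  refine PiTensorProduct.ext (MultilinearMap.ext fun x => ?_)
  simp only [LinearMap.compMultilinearMap_apply, amp_tprod, LinearMap.smul_apply]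
  exact MultilinearMap.map_update_smul _ _ _ _ _

lemma amp_sub (l : Fin k) (f g : Module.End ℂ (E l)) :
    amp l (f - g) = amp l f - amp l g := by
  have h := amp_add l (f - g) g
  rw [sub_add_cancel] at h
  rw [h, add_sub_cancel_right]

lemma amp_mul (l : Fin k) (f g : Module.End ℂ (E l)) :
    amp l (f * g) = amp l f * amp l g := by
  refine PiTensorProduct.ext (MultilinearMap.ext fun x => ?_)
  simp [amp_tprod, Module.End.mul_apply, Function.update_idem]

lemma amp_pow (l : Fin k) (f : Module.End ℂ (E l)) (n : ℕ) :
    amp l (f ^ n) = (amp l f) ^ n := by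
  induction n with
  | zero => rw [pow_zero, pow_zero, amp_one]
  | succ n ih => rw [pow_succ, pow_succ, amp_mul, ih]

lemma amp_commute {l j : Fin k} (h : l ≠ j) (f : Module.End ℂ (E l))
    (g : Module.End ℂ (E j)) : amp l f * amp j g = amp j g * amp l f := by
  refine PiTensorProduct.ext (MultilinearMap.ext fun x => ?_)
  simp only [LinearMap.compMultilinearMap_apply, Module.End.mul_apply, amp_tprod]
  rw [Function.update_of_ne h, Function.update_of_ne h.symm, Function.update_comm h.symm]

/-- `f - λ • 1` amplified. -/
lemma amp_sub_smul_one (l : Fin k) (f : Module.End ℂ (E l)) (c : ℂ) :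
    amp l (f - c • 1) = amp l f - c • 1 := by
  rw [amp_sub, amp_smul, amp_one]

/-! ### The core nilpotency computation -/

set_option maxHeartbeats 1000000 in
set_option synthInstance.maxHeartbeats 400000 in
/-- Core lemma: if each `x l` is killed by `(M l - lv l)^(rv l)`, then the pure tensor
`⊗ x` is killed by `(P^⊗(M) - P(lv))^N` for `N ≥ 1 + ∑ (rv l - 1)`. -/
lemma core (M : ∀ l, Module.End ℂ (E l)) (P : MvPolynomial (Fin k) ℂ)
    (lv : Fin k → ℂ) (rv : Fin k → ℕ)
    (x : ∀ l, E l) (hx : ∀ l, ((M l - lv l • 1) ^ rv l) (x l) = 0)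
    {N : ℕ} (hN : 1 + ∑ l, (rv l - 1) ≤ N) :
    ((tensorEval P M - (MvPolynomial.eval lv P) • 1) ^ N) (PiTensorProduct.tprod ℂ x) = 0 := by
  classical
  set A : Fin k → Module.End ℂ (⨂[ℂ] l, E l) := fun l => amp l (M l) with hA
  have hAcomm : ∀ u ∈ Set.range A, ∀ w ∈ Set.range A, u * w = w * u := by
    rintro _ ⟨l, rfl⟩ _ ⟨j, rfl⟩
    rcases eq_or_ne l j with rfl | h
    · rfl
    · exact amp_commute h _ _
  letI : CommRing ↥(Algebra.adjoin ℂ (Set.range A)) := Algebra.adjoinCommRingOfComm ℂ hAcomm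
  let a : Fin k → ↥(Algebra.adjoin ℂ (Set.range A)) :=
    fun l => ⟨A l, Algebra.subset_adjoin ⟨l, rfl⟩⟩
  -- products of powers act diagonally on pure tensors
  have hprodgen : ∀ (α : Fin k → ℕ) (y : ∀ l, E l) (s : Finset (Fin k)),
      (((∏ l ∈ s, a l ^ α l : ↥(Algebra.adjoin ℂ (Set.range A))) :
          Module.End ℂ (⨂[ℂ] l, E l)) (PiTensorProduct.tprod ℂ y))
        = PiTensorProduct.tprod ℂ (fun j => if j ∈ s then (M j ^ α j) (y j) else y j) := by
    intro α y s
    induction s using Finset.induction_on with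
    | empty => simp
    | @insert i s his ih =>
        rw [Finset.prod_insert his, Subalgebra.coe_mul, Module.End.mul_apply, ih]
        have hcoe : ((a i ^ α i : ↥(Algebra.adjoin ℂ (Set.range A))) :
            Module.End ℂ (⨂[ℂ] l, E l)) = amp i (M i ^ α i) := by
          rw [Subalgebra.coe_pow, amp_pow]
        rw [hcoe, amp_tprod]
        congr 1
        funext j
        rcases eq_or_ne j i with rfl | hji
        · simp [his]
        · simp [Function.update_of_ne hji, Finset.mem_insert, hji]
  have hmap : ∀ α : Fin k →₀ ℕ,
      ((∏ l, a l ^ α l : ↥(Algebra.adjoin ℂ (Set.range A))) :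
          Module.End ℂ (⨂[ℂ] l, E l))
        = PiTensorProduct.map fun l => (M l) ^ (α l) := by
    intro α
    refine PiTensorProduct.ext (MultilinearMap.ext fun y => ?_)
    simp only [LinearMap.compMultilinearMap_apply, PiTensorProduct.map_tprod]
    rw [hprodgen]
    simp
  -- the tensor evaluation comes from the polynomial evaluation in the adjoined algebra
  have hbar : tensorEval P M
      = ((MvPolynomial.aeval a P : ↥(Algebra.adjoin ℂ (Set.range A))) :
          Module.End ℂ (⨂[ℂ] l, E l)) := by
    rw [MvPolynomial.aeval_def, MvPolynomial.eval₂_eq', AddSubmonoidClass.coe_finset_sum,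
      tensorEval]
    refine Finset.sum_congr rfl fun α _ => ?_
    rw [Subalgebra.coe_mul, hmap α,
      show ((algebraMap ℂ ↥(Algebra.adjoin ℂ (Set.range A)) (P.coeff α) :
          ↥(Algebra.adjoin ℂ (Set.range A))) : Module.End ℂ (⨂[ℂ] l, E l))
        = algebraMap ℂ (Module.End ℂ (⨂[ℂ] l, E l)) (P.coeff α) from rfl,
      ← Algebra.smul_def]
  -- the "kill" ideal of the pure tensor
  let I : Ideal ↥(Algebra.adjoin ℂ (Set.range A)) :=
    { carrier := {w | (w : Module.End ℂ (⨂[ℂ] l, E l)) (PiTensorProduct.tprod ℂ x) = 0}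
      add_mem' := fun {u w} hu hw => by
        simp only [Set.mem_setOf_eq] at *
        rw [Subalgebra.coe_add, LinearMap.add_apply, hu, hw, add_zero]
      zero_mem' := by simp
      smul_mem' := fun c {w} hw => by
        simp only [Set.mem_setOf_eq] at *
        rw [smul_eq_mul, Subalgebra.coe_mul, Module.End.mul_apply, hw, map_zero] }
  have hmemI : ∀ w : ↥(Algebra.adjoin ℂ (Set.range A)), w ∈ I →
      (w : Module.End ℂ (⨂[ℂ] l, E l)) (PiTensorProduct.tprod ℂ x) = 0 := fun w hw => hw
  have hnI : ∀ l, (a l - algebraMap ℂ ↥(Algebra.adjoin ℂ (Set.range A)) (lv l)) ^ rv l ∈ I := by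
    intro l
    show ((((a l - algebraMap ℂ ↥(Algebra.adjoin ℂ (Set.range A)) (lv l)) ^ rv l :
        ↥(Algebra.adjoin ℂ (Set.range A))) : Module.End ℂ (⨂[ℂ] l, E l)))
        (PiTensorProduct.tprod ℂ x) = 0
    rw [Subalgebra.coe_pow, Subalgebra.coe_sub,
      show ((algebraMap ℂ ↥(Algebra.adjoin ℂ (Set.range A)) (lv l) :
          ↥(Algebra.adjoin ℂ (Set.range A))) : Module.End ℂ (⨂[ℂ] l, E l))
        = algebraMap ℂ (Module.End ℂ (⨂[ℂ] l, E l)) (lv l) from rfl,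
      Algebra.algebraMap_eq_smul_one]
    have h1 : (A l - lv l • 1 : Module.End ℂ (⨂[ℂ] l, E l)) = amp l (M l - lv l • 1) := by
      rw [amp_sub_smul_one]
    show ((A l - lv l • 1 : Module.End ℂ (⨂[ℂ] l, E l)) ^ rv l)
        (PiTensorProduct.tprod ℂ x) = 0
    rw [h1, ← amp_pow, amp_tprod, hx l]
    exact MultilinearMap.map_update_zero _ _ _
  have hzmem : MvPolynomial.aeval a P
        - algebraMap ℂ ↥(Algebra.adjoin ℂ (Set.range A)) (MvPolynomial.eval lv P)
      ∈ Ideal.span (Set.range fun l =>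
          a l - algebraMap ℂ ↥(Algebra.adjoin ℂ (Set.range A)) (lv l)) :=
    aeval_sub_mem_span a lv P
  have hfin := pow_mem_of_mem_span I _ rv hnI hzmem hN
  have hco : tensorEval P M - MvPolynomial.eval lv P • 1
      = ((MvPolynomial.aeval a P
          - algebraMap ℂ ↥(Algebra.adjoin ℂ (Set.range A)) (MvPolynomial.eval lv P) :
          ↥(Algebra.adjoin ℂ (Set.range A))) : Module.End ℂ (⨂[ℂ] l, E l)) := by
    rw [Subalgebra.coe_sub, ← hbar,
      show ((algebraMap ℂ ↥(Algebra.adjoin ℂ (Set.range A)) (MvPolynomial.eval lv P) :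
          ↥(Algebra.adjoin ℂ (Set.range A))) : Module.End ℂ (⨂[ℂ] l, E l))
        = algebraMap ℂ (Module.End ℂ (⨂[ℂ] l, E l)) (MvPolynomial.eval lv P) from rfl,
      Algebra.algebraMap_eq_smul_one]
  rw [hco, ← Subalgebra.coe_pow]
  exact hmemI _ hfin

end Stmt8Aux

theorem stmt8 (k : ℕ) (hk : 1 ≤ k) (E : Fin k → Type*)
    [∀ l, AddCommGroup (E l)] [∀ l, Module ℂ (E l)]
    [∀ l, FiniteDimensional ℂ (E l)] [∀ l, Nontrivial (E l)]
    (M : ∀ l, Module.End ℂ (E l))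
    (e : Fin k → ℕ) (lam : ∀ l, Fin (e l) → ℂ)
    (hinj : ∀ l, Function.Injective (lam l))
    (hspec : ∀ l, spectrum ℂ (M l) = Set.range (lam l))
    (r : ∀ l, Fin (e l) → ℕ)
    (hr : ∀ l m, r l m = (minpoly ℂ (M l)).rootMultiplicity (lam l m))
    (P : MvPolynomial (Fin k) ℂ) :
    (Polynomial.aeval (tensorEval P M)
        (∏ μ ∈ Finset.image
            (fun m : ∀ l, Fin (e l) => MvPolynomial.eval (fun l => lam l (m l)) P)
            Finset.univ,
          (X - C μ) ^
            ((Finset.univ.filter fun m : ∀ l, Fin (e l) =>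
                MvPolynomial.eval (fun l => lam l (m l)) P = μ).sup
              fun m => 1 + ∑ l, (r l (m l) - 1))) = 0) ∧
    minpoly ℂ (tensorEval P M) ∣
      ∏ μ ∈ Finset.image
          (fun m : ∀ l, Fin (e l) => MvPolynomial.eval (fun l => lam l (m l)) P)
          Finset.univ,
        (X - C μ) ^
          ((Finset.univ.filter fun m : ∀ l, Fin (e l) =>
              MvPolynomial.eval (fun l => lam l (m l)) P = μ).sup
            fun m => 1 + ∑ l, (r l (m l) - 1)) := by
  classical
  suffices h0 : Polynomial.aeval (tensorEval P M)
      (∏ μ ∈ Finset.image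
          (fun m : ∀ l, Fin (e l) => MvPolynomial.eval (fun l => lam l (m l)) P)
          Finset.univ,
        (X - C μ) ^
          ((Finset.univ.filter fun m : ∀ l, Fin (e l) =>
              MvPolynomial.eval (fun l => lam l (m l)) P = μ).sup
            fun m => 1 + ∑ l, (r l (m l) - 1))) = 0 by
    exact ⟨h0, minpoly.dvd ℂ _ h0⟩
  have hspan : ∀ l, ⨆ m : Fin (e l), LinearMap.ker ((M l - lam l m • 1) ^ r l m) = ⊤ :=
    fun l => Stmt8Aux.iSup_ker_eq_top (M l) (lam l) (hspec l) (r l) (hr l)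
  set T : Set (⨂[ℂ] l, E l) := {z | ∃ (m : ∀ l, Fin (e l)) (x : ∀ l, E l),
      (∀ l, ((M l - lam l (m l) • 1) ^ r l (m l)) (x l) = 0)
      ∧ z = PiTensorProduct.tprod ℂ x} with hT
  -- the spanning property
  have hWtop : Submodule.span ℂ T = ⊤ := by
    have claim : ∀ s : Finset (Fin k), ∀ x : ∀ l, E l,
        (∀ l, l ∉ s → ∃ m : Fin (e l), ((M l - lam l m • 1) ^ r l m) (x l) = 0) →
        PiTensorProduct.tprod ℂ x ∈ Submodule.span ℂ T := by
      intro s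
      induction s using Finset.induction_on with
      | empty =>
          intro x hx
          choose m hm using fun l => hx l (Finset.notMem_empty l)
          exact Submodule.subset_span ⟨m, x, hm, rfl⟩
      | @insert i s his ih =>
          intro x hx
          have hxi : x i ∈ Submodule.span ℂ
              (⋃ m : Fin (e i), (LinearMap.ker ((M i - lam i m • 1) ^ r i m) : Set (E i))) := by
            rw [← Submodule.iSup_eq_span, hspan i]
            trivial
          have hgoal : ∀ y ∈ Submodule.span ℂ
              (⋃ m : Fin (e i), (LinearMap.ker ((M i - lam i m • 1) ^ r i m) : Set (E i))),
              PiTensorProduct.tprod ℂ (Function.update x i y) ∈ Submodule.span ℂ T := by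
            intro y hy
            induction hy using Submodule.span_induction with
            | mem y hy =>
                obtain ⟨m, hm⟩ := Set.mem_iUnion.mp hy
                refine ih (Function.update x i y) fun l hl => ?_
                rcases eq_or_ne l i with rfl | hli
                · exact ⟨m, by rw [Function.update_self]; exact hm⟩
                · obtain ⟨m', hm'⟩ := hx l (by simp [Finset.mem_insert, hli, hl])
                  exact ⟨m', by rw [Function.update_of_ne hli]; exact hm'⟩
            | zero =>
                rw [MultilinearMap.map_update_zero]
                exact Submodule.zero_mem _
            | add u w hu hw ihu ihw =>
                rw [MultilinearMap.map_update_add]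
                exact Submodule.add_mem _ ihu ihw
            | smul c u hu ihu =>
                rw [MultilinearMap.map_update_smul]
                exact Submodule.smul_mem _ _ ihu
          have := hgoal (x i) hxi
          rwa [Function.update_eq_self] at this
    rw [eq_top_iff, ← PiTensorProduct.span_tprod_eq_top, Submodule.span_le]
    rintro _ ⟨x, rfl⟩
    exact claim Finset.univ x (fun l hl => absurd (Finset.mem_univ l) hl)
  -- the annihilation on generators
  have hkill : ∀ z ∈ T, Polynomial.aeval (tensorEval P M)
      (∏ μ ∈ Finset.image
          (fun m : ∀ l, Fin (e l) => MvPolynomial.eval (fun l => lam l (m l)) P)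
          Finset.univ,
        (X - C μ) ^
          ((Finset.univ.filter fun m : ∀ l, Fin (e l) =>
              MvPolynomial.eval (fun l => lam l (m l)) P = μ).sup
            fun m => 1 + ∑ l, (r l (m l) - 1))) z = 0 := by
    rintro _ ⟨m, x, hx, rfl⟩
    have hμV : MvPolynomial.eval (fun l => lam l (m l)) P ∈ Finset.image
        (fun m : ∀ l, Fin (e l) => MvPolynomial.eval (fun l => lam l (m l)) P)
        Finset.univ := Finset.mem_image_of_mem _ (Finset.mem_univ m)
    rw [← Finset.mul_prod_erase _ _ hμV, mul_comm, map_mul, Module.End.mul_apply]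
    have hsup : 1 + ∑ l, (r l (m l) - 1) ≤
        ((Finset.univ.filter fun m' : ∀ l, Fin (e l) =>
            MvPolynomial.eval (fun l => lam l (m' l)) P
              = MvPolynomial.eval (fun l => lam l (m l)) P).sup
          fun m' => 1 + ∑ l, (r l (m' l) - 1)) :=
      Finset.le_sup (f := fun m' : ∀ l, Fin (e l) => 1 + ∑ l, (r l (m' l) - 1))
        (Finset.mem_filter.mpr ⟨Finset.mem_univ m, rfl⟩)
    have hcore : ((tensorEval P M - (MvPolynomial.eval (fun l => lam l (m l)) P) • 1)
          ^ (1 + ∑ l, (r l (m l) - 1))) (PiTensorProduct.tprod ℂ x) = 0 :=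
      Stmt8Aux.core M P (fun l => lam l (m l)) (fun l => r l (m l)) x hx le_rfl
    have hzero : (Polynomial.aeval (tensorEval P M)
        ((X - C (MvPolynomial.eval (fun l => lam l (m l)) P)) ^
          ((Finset.univ.filter fun m' : ∀ l, Fin (e l) =>
              MvPolynomial.eval (fun l => lam l (m' l)) P
                = MvPolynomial.eval (fun l => lam l (m l)) P).sup
            fun m' => 1 + ∑ l, (r l (m' l) - 1)))) (PiTensorProduct.tprod ℂ x) = 0 := by
      rw [map_pow, map_sub, Polynomial.aeval_X, Polynomial.aeval_C,
        Algebra.algebraMap_eq_smul_one]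
      rw [← Nat.sub_add_cancel hsup, pow_add, Module.End.mul_apply, hcore, map_zero]
    rw [hzero, map_zero]
  -- conclude
  have hall : ∀ v : ⨂[ℂ] l, E l, Polynomial.aeval (tensorEval P M)
      (∏ μ ∈ Finset.image
          (fun m : ∀ l, Fin (e l) => MvPolynomial.eval (fun l => lam l (m l)) P)
          Finset.univ,
        (X - C μ) ^
          ((Finset.univ.filter fun m : ∀ l, Fin (e l) =>
              MvPolynomial.eval (fun l => lam l (m l)) P = μ).sup
            fun m => 1 + ∑ l, (r l (m l) - 1))) v = 0 := by
    intro v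
    have hv : v ∈ Submodule.span ℂ T := by rw [hWtop]; trivial
    induction hv using Submodule.span_induction with
    | mem z hz => exact hkill z hz
    | zero => simp
    | add u w hu hw ihu ihw => rw [map_add, ihu, ihw, add_zero]
    | smul c u hu ihu => rw [map_smul, ihu, smul_zero]
  exact LinearMap.ext fun v => by rw [hall v]; rfl
end

section
/- Let $k\ge 1$, let $M_1,\ldots,M_k$ be endomorphisms of finite-dimensional complex vector spaces $E_1,\ldots,E_k$, let $P\in\mathbb{C}[x_1,\ldots,x_k]$, and fix $1\le p\le k$. Let $G\in\mathbb{C}[x_1,\ldots,x_k,y]$ be the unique polynomial satisfying $(y-x_p)\,G(x_1,\ldots,x_k,y) = P(x_1,\ldots,x_{p-1},y,x_{p+1},\ldots,x_k) - P(x_1,\ldots,x_k)$, and write $G = \sum_{\beta} d_\beta\, x_1^{\beta_1}\cdots x_k^{\beta_k} y^{\beta_{k+1}}$. Then the map $N \mapsto P^{\otimes}(M_1,\ldots,M_{p-1},N,M_{p+1},\ldots,M_k)$, from the space of endomorphisms of $E_p$ to the space of endomorphisms of $E_1\otimes\cdots\otimes E_k$, is differentiable at $M_p$, and its derivative in the direction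 $H$ equals $\sum_{\beta} d_\beta\, M_1^{\beta_1}\otimes\cdots\otimes M_{p-1}^{\beta_{p-1}}\otimes \big(M_p^{\beta_p}\, H\, M_p^{\beta_{k+1}}\big)\otimes M_{p+1}^{\beta_{p+1}}\otimes\cdots\otimes M_k^{\beta_k}$. -/
open MvPolynomial

attribute [local instance] Matrix.normedAddCommGroup Matrix.normedSpace

/-! ### Generic helpers -/

lemma sum_support_extend {σ W : Type*} [AddCommGroup W] [Module ℂ W]
    (v : (σ →₀ ℕ) → W) (Q : MvPolynomial σ ℂ) (S : Finset (σ →₀ ℕ)) (hS : Q.support ⊆ S) :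
    ∑ β ∈ Q.support, Q.coeff β • v β = ∑ β ∈ S, Q.coeff β • v β := by
  refine Finset.sum_subset hS fun β _ hb => ?_
  simp [MvPolynomial.notMem_support_iff.mp hb]

noncomputable def polySum {σ W : Type*} [DecidableEq σ] [AddCommGroup W] [Module ℂ W]
    (v : (σ →₀ ℕ) → W) : MvPolynomial σ ℂ →ₗ[ℂ] W where
  toFun Q := ∑ β ∈ Q.support, Q.coeff β • v β
  map_add' Q R := by
    rw [sum_support_extend v (Q + R) (Q.support ∪ R.support) MvPolynomial.support_add,
      sum_support_extend v Q (Q.support ∪ R.support) Finset.subset_union_left,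
      sum_support_extend v R (Q.support ∪ R.support) Finset.subset_union_right,
      ← Finset.sum_add_distrib]
    simp [MvPolynomial.coeff_add, add_smul]
  map_smul' c Q := by
    simp only [RingHom.id_apply]
    rw [sum_support_extend v (c • Q) Q.support MvPolynomial.support_smul,
      Finset.smul_sum]
    simp [MvPolynomial.coeff_smul, smul_smul]

lemma polySum_apply {σ W : Type*} [DecidableEq σ] [AddCommGroup W] [Module ℂ W]
    (v : (σ →₀ ℕ) → W) (Q : MvPolynomial σ ℂ) :
    polySum v Q = ∑ β ∈ Q.support, Q.coeff β • v β := rfl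

lemma polySum_monomial {σ W : Type*} [DecidableEq σ] [AddCommGroup W] [Module ℂ W]
    (v : (σ →₀ ℕ) → W) (β : σ →₀ ℕ) (c : ℂ) :
    polySum v (monomial β c) = c • v β := by
  rw [polySum_apply,
    sum_support_extend v _ {β} (by rw [MvPolynomial.support_monomial]; split <;> simp),
    Finset.sum_singleton, MvPolynomial.coeff_monomial, if_pos rfl]

/-! ### Matrix calculus -/

abbrev Mat (d : ℕ) := Matrix (Fin d) (Fin d) ℂ

noncomputable def sandC {d : ℕ} (A B : Mat d) : Mat d →L[ℂ] Mat d :=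
  LinearMap.toContinuousLinearMap ((LinearMap.mulRight ℂ B).comp (LinearMap.mulLeft ℂ A))

@[simp] lemma sandC_apply {d : ℕ} (A B H : Mat d) : sandC A B H = A * H * B := by
  simp [sandC]

noncomputable def mulCLM (d : ℕ) : Mat d →L[ℂ] Mat d →L[ℂ] Mat d :=
  LinearMap.toContinuousLinearMap
    { toFun := fun A => LinearMap.toContinuousLinearMap (LinearMap.mulLeft ℂ A)
      map_add' := by intro A B; ext H; simp [add_mul]
      map_smul' := by intro c A; ext H; simp [smul_mul_assoc] }

@[simp] lemma mulCLM_apply {d : ℕ} (A B : Mat d) : mulCLM d A B = A * B := by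
  simp [mulCLM]

lemma hasFDerivAt_mul_mat {d : ℕ} {f g : Mat d → Mat d} {f' g' : Mat d →L[ℂ] Mat d} {x : Mat d}
    (hf : HasFDerivAt f f' x) (hg : HasFDerivAt g g' x) :
    HasFDerivAt (fun N => f N * g N)
      (@HAdd.hAdd (Mat d →L[ℂ] Mat d) (Mat d →L[ℂ] Mat d) (Mat d →L[ℂ] Mat d) _ (((mulCLM d).flip (g x)).comp f') ((mulCLM d (f x)).comp g')) x := by
  have h := ((mulCLM d).isBoundedBilinearMap.hasFDerivAt (f x, g x)).comp x (hf.prodMk hg)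
  refine h.congr_fderiv ?_
  ext H
  simp [IsBoundedBilinearMap.deriv_apply, add_comm]
  exact add_comm _ _

lemma hasFDerivAt_pow_mat {d : ℕ} (m : ℕ) (M : Mat d) :
    HasFDerivAt (fun N : Mat d => N ^ m)
      (∑ t ∈ Finset.range m, sandC (M ^ t) (M ^ (m - 1 - t))) M := by
  induction m with
  | zero => simpa using hasFDerivAt_const (1 : Mat d) M
  | succ m ih =>
      have h := hasFDerivAt_mul_mat ih (hasFDerivAt_id M)
      have h2 : (fun N : Mat d => N ^ m * id N) = fun N => N ^ (m + 1) := by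
        funext N; rw [pow_succ]; rfl
      rw [h2] at h
      refine h.congr_fderiv (ContinuousLinearMap.ext fun H => ?_)
      show ((∑ t ∈ Finset.range m, sandC (M ^ t) (M ^ (m - 1 - t))) H) * M +
        M ^ m * H = _
      simp only [ContinuousLinearMap.add_apply, ContinuousLinearMap.comp_apply,
        ContinuousLinearMap.coe_sum', Finset.sum_apply, ContinuousLinearMap.flip_apply,
        mulCLM_apply, sandC_apply, ContinuousLinearMap.coe_id', id_eq,
        Finset.sum_range_succ]
      rw [Finset.sum_mul]
      congr 1
      · refine Finset.sum_congr rfl fun t ht => ?_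
        rw [mul_assoc, ← pow_succ]
        congr 2
        have := Finset.mem_range.mp ht
        omega
      · simp

/-! ### Main constructions -/

section Main

variable {k : ℕ} {n : Fin k → ℕ} (M : ∀ l, Matrix (Fin (n l)) (Fin (n l)) ℂ) (p : Fin k)

abbrev BigMat (n : Fin k → ℕ) := Matrix (∀ l, Fin (n l)) (∀ l, Fin (n l)) ℂ

/-- `A ↦ (i j ↦ A (i p) (j p) * C i j)` as a linear map. -/
def phiL (C : (∀ l, Fin (n l)) → (∀ l, Fin (n l)) → ℂ) :
    Mat (n p) →ₗ[ℂ] BigMat n where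
  toFun A := Matrix.of fun i j => A (i p) (j p) * C i j
  map_add' A B := by
    ext i j
    simp [add_mul]
  map_smul' c A := by
    ext i j
    simp [Matrix.smul_apply, smul_eq_mul, mul_assoc]

lemma phiL_apply (C : (∀ l, Fin (n l)) → (∀ l, Fin (n l)) → ℂ) (A : Mat (n p))
    (i j : ∀ l, Fin (n l)) : phiL p C A i j = A (i p) (j p) * C i j := rfl

noncomputable def Kmat (α : Fin k →₀ ℕ) (Mf : ∀ l, Matrix (Fin (n l)) (Fin (n l)) ℂ) :
    BigMat n :=
  Matrix.of fun i j => ∏ l, (Mf l ^ α l) (i l) (j l)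

lemma tensorEvalM_eq (P : MvPolynomial (Fin k) ℂ)
    (Mf : ∀ l, Matrix (Fin (n l)) (Fin (n l)) ℂ) :
    tensorEvalM (n := n) P Mf = polySum (fun α => Kmat α Mf) P := rfl

/-- the weight function extracted from a multi-index for the `k+1`-variable polynomial -/
noncomputable def CwG (β : Fin (k + 1) →₀ ℕ) :
    (∀ l, Fin (n l)) → (∀ l, Fin (n l)) → ℂ :=
  fun i j => ∏ l ∈ Finset.univ.erase p, (M l ^ β l.castSucc) (i l) (j l)

/-- the building block of the derivative -/
noncomputable def Lmap (β : Fin (k + 1) →₀ ℕ) : Mat (n p) →L[ℂ] BigMat n :=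
  (LinearMap.toContinuousLinearMap (phiL p (CwG M p β))).comp
    (sandC (M p ^ β p.castSucc) (M p ^ β (Fin.last k)))

lemma Lmap_apply (β : Fin (k + 1) →₀ ℕ) (H : Mat (n p)) :
    Lmap M p β H = Matrix.of (fun i j => ∏ l,
      (Function.update (fun l' => M l' ^ β l'.castSucc) p
        (M p ^ β p.castSucc * H * M p ^ β (Fin.last k)) l) (i l) (j l)) := by
  ext i j
  show phiL p (CwG M p β) (M p ^ β p.castSucc * H * M p ^ β (Fin.last k)) i j = _
  rw [phiL_apply, Matrix.of_apply,
    ← Finset.mul_prod_erase Finset.univ _ (Finset.mem_univ p), Function.update_self]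
  congr 1
  refine Finset.prod_congr rfl fun l hl => ?_
  rw [Function.update_of_ne (Finset.ne_of_mem_erase hl)]

noncomputable def Dmap : MvPolynomial (Fin (k + 1)) ℂ →ₗ[ℂ] (Mat (n p) →L[ℂ] BigMat n) :=
  polySum (fun β => Lmap M p β)

/-- weight function for the `k`-variable multi-index -/
noncomputable def Cw (α : Fin k →₀ ℕ) :
    (∀ l, Fin (n l)) → (∀ l, Fin (n l)) → ℂ :=
  fun i j => ∏ l ∈ Finset.univ.erase p, (M l ^ α l) (i l) (j l)

lemma Kmat_update (α : Fin k →₀ ℕ) (N : Mat (n p)) :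
    Kmat α (Function.update M p N) = phiL p (Cw M p α) (N ^ α p) := by
  ext i j
  show (∏ l, ((Function.update M p N l) ^ α l) (i l) (j l)) = _
  rw [phiL_apply, ← Finset.mul_prod_erase Finset.univ _ (Finset.mem_univ p),
    Function.update_self]
  unfold Cw
  congr 1
  refine Finset.prod_congr rfl fun l hl => ?_
  rw [Function.update_of_ne (Finset.ne_of_mem_erase hl)]

lemma keyMono (α : Fin k →₀ ℕ) (c : ℂ) :
    ∃ G0 : MvPolynomial (Fin (k + 1)) ℂ,
      ((X (Fin.last k) - X p.castSucc) * G0 =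
        MvPolynomial.aeval
            (fun l : Fin k => if l = p then X (Fin.last k) else X l.castSucc)
            (monomial α c) -
          MvPolynomial.rename Fin.castSucc (monomial α c)) ∧
      HasFDerivAt
        (fun N => tensorEvalM (n := n) (monomial α c) (Function.update M p N))
        (Dmap M p G0) (M p) := by
  classical
  set m := α p with hm
  set e := Finsupp.erase p α with he
  set R : MvPolynomial (Fin (k + 1)) ℂ := rename Fin.castSucc (monomial e 1) with hR
  set S : MvPolynomial (Fin (k + 1)) ℂ :=
    ∑ i ∈ Finset.range m, X (Fin.last k) ^ i * X p.castSucc ^ (m - 1 - i) with hS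
  refine ⟨c • (R * S), ?_, ?_⟩
  · -- the algebraic identity
    have hmono : (monomial α (1 : ℂ)) = monomial e 1 * X p ^ m := by
      rw [X_pow_eq_monomial, monomial_mul, one_mul, he, hm, Finsupp.erase_add_single]
    have hagree :
        aeval (fun l : Fin k => if l = p then X (Fin.last k) else X l.castSucc)
          (monomial e (1 : ℂ)) = R := by
      rw [hR,
        show (rename (Fin.castSucc : Fin k → Fin (k + 1))
            (monomial e (1 : ℂ)) : MvPolynomial (Fin (k + 1)) ℂ) =
          aeval (fun l : Fin k => X (Fin.castSucc l)) (monomial e (1 : ℂ)) from by rw [rename_eq_aeval]; rfl,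
        aeval_monomial, aeval_monomial]
      congr 1
      refine Finsupp.prod_congr fun l hl => ?_
      have hlp : l ≠ p := by
        rw [he, Finsupp.support_erase] at hl
        exact Finset.ne_of_mem_erase hl
      rw [if_neg hlp]
    have h1 : (monomial α c : MvPolynomial (Fin k) ℂ) = C c * monomial α 1 := by
      rw [C_mul_monomial, mul_one]
    have hgeo := geom_sum₂_mul (X (Fin.last k) : MvPolynomial (Fin (k + 1)) ℂ)
      (X p.castSucc) m
    rw [h1, map_mul, map_mul, hmono, map_mul, map_mul, map_pow, map_pow, aeval_X,
      rename_X, aeval_C, rename_C, if_pos rfl, hagree, MvPolynomial.smul_eq_C_mul,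
      MvPolynomial.algebraMap_eq]
    linear_combination (C c * R) * hgeo
  · -- the derivative
    have hCw : (fun N => tensorEvalM (n := n) (monomial α c) (Function.update M p N)) =
        fun N => c • (phiL p (Cw M p α)) (N ^ m) := by
      funext N
      rw [tensorEvalM_eq, polySum_monomial, Kmat_update]
    -- the multi-indices appearing in R * S
    set γ : ℕ → (Fin (k + 1) →₀ ℕ) := fun i =>
      Finsupp.mapDomain Fin.castSucc e +
        (Finsupp.single (Fin.last k) i + Finsupp.single p.castSucc (m - 1 - i)) with hγ
    have hlast_notin : (Fin.last k) ∉ Set.range (Fin.castSucc : Fin k → Fin (k + 1)) := by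
      rintro ⟨a, ha⟩
      exact (Fin.castSucc_lt_last a).ne ha
    have hγp : ∀ i, γ i p.castSucc = m - 1 - i := by
      intro i
      rw [hγ]
      simp only [Finsupp.add_apply]
      rw [Finsupp.mapDomain_apply (Fin.castSucc_injective k), he, Finsupp.erase_same,
        Finsupp.single_apply, if_neg ((Fin.castSucc_lt_last p).ne'), Finsupp.single_apply,
        if_pos rfl]
      omega
    have hγlast : ∀ i, γ i (Fin.last k) = i := by
      intro i
      rw [hγ]
      simp only [Finsupp.add_apply]
      rw [Finsupp.mapDomain_notin_range _ _ hlast_notin, Finsupp.single_apply, if_pos rfl,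
        Finsupp.single_apply, if_neg ((Fin.castSucc_lt_last p).ne)]
      omega
    have hγcast : ∀ i, ∀ l : Fin k, l ≠ p → γ i l.castSucc = α l := by
      intro i l hlp
      rw [hγ]
      simp only [Finsupp.add_apply]
      rw [Finsupp.mapDomain_apply (Fin.castSucc_injective k), he, Finsupp.erase_ne hlp,
        Finsupp.single_apply, if_neg ((Fin.castSucc_lt_last l).ne'),
        Finsupp.single_apply, if_neg fun h => hlp ((Fin.castSucc_injective k) h).symm]
      omega
    have hCwG : ∀ i, CwG M p (γ i) = Cw M p α := by
      intro i
      funext a b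
      unfold CwG Cw
      refine Finset.prod_congr rfl fun l hl => ?_
      rw [hγcast i l (Finset.ne_of_mem_erase hl)]
    have hRS : R * S = ∑ i ∈ Finset.range m, monomial (γ i) (1 : ℂ) := by
      rw [hS, Finset.mul_sum]
      refine Finset.sum_congr rfl fun i _ => ?_
      rw [hR, rename_monomial, X_pow_eq_monomial, X_pow_eq_monomial, monomial_mul,
        monomial_mul, one_mul, hγ]
      norm_num
    have hD : Dmap M p (c • (R * S)) =
        c • ((LinearMap.toContinuousLinearMap (phiL p (Cw M p α))).comp
          (∑ t ∈ Finset.range m, sandC (M p ^ t) (M p ^ (m - 1 - t)))) := by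
      rw [map_smul]
      congr 1
      rw [hRS, map_sum]
      refine ContinuousLinearMap.ext fun H => ?_
      have hL : ∀ i, (Dmap M p (monomial (γ i) (1 : ℂ))) H = Lmap M p (γ i) H := by
        intro i
        rw [Dmap, polySum_monomial, one_smul]
      simp only [ContinuousLinearMap.coe_sum', Finset.sum_apply, hL]
      have hLap : ∀ i ∈ Finset.range m, Lmap M p (γ i) H =
          phiL p (Cw M p α) (M p ^ (m - 1 - i) * H * M p ^ i) := by
        intro i _
        rw [Lmap, ContinuousLinearMap.comp_apply, sandC_apply, hγp, hγlast, hCwG,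
          LinearMap.coe_toContinuousLinearMap']
      rw [Finset.sum_congr rfl hLap, ContinuousLinearMap.comp_apply,
        ContinuousLinearMap.coe_sum', Finset.sum_apply, LinearMap.coe_toContinuousLinearMap',
        ← map_sum]
      congr 1
      simp only [sandC_apply]
      rw [← Finset.sum_range_reflect (fun t => M p ^ t * H * M p ^ (m - 1 - t)) m]
      refine Finset.sum_congr rfl fun i hi => ?_
      have h2 : m - 1 - (m - 1 - i) = i := by
        have := Finset.mem_range.mp hi
        omega
      rw [h2]
    rw [hCw, hD]
    exact ((LinearMap.toContinuousLinearMap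
      (phiL p (Cw M p α))).hasFDerivAt.comp (M p) (hasFDerivAt_pow_mat m (M p))).const_smul c

end Main

/-- The polynomial `G` of `k + 1` variables (the variables
`x₁, …, x_k` are indexed by `Fin.castSucc`, the extra variable `y` by `Fin.last k`)
satisfies `(y - x_p) G = P(x₁,…,y,…,x_k) - P(x₁,…,x_k)`; then the map
`N ↦ P^⊗(M₁,…,N,…,M_k)` is differentiable at `M_p`, with derivative in the
direction `H` given by
`∑_β d_β M₁^{β₁} ⊗ ⋯ ⊗ (M_p^{β_p} H M_p^{β_{k+1}}) ⊗ ⋯ ⊗ M_k^{β_k}`. -/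
theorem stmt12 (k : ℕ) (hk : 1 ≤ k) (n : Fin k → ℕ)
    (M : ∀ l, Matrix (Fin (n l)) (Fin (n l)) ℂ) (P : MvPolynomial (Fin k) ℂ)
    (p : Fin k) (G : MvPolynomial (Fin (k + 1)) ℂ)
    (hG : (X (Fin.last k) - X p.castSucc) * G =
      MvPolynomial.aeval
          (fun l : Fin k => if l = p then X (Fin.last k) else X l.castSucc) P -
        MvPolynomial.rename Fin.castSucc P) :
    ∃ D : Matrix (Fin (n p)) (Fin (n p)) ℂ →L[ℂ]
        Matrix (∀ l, Fin (n l)) (∀ l, Fin (n l)) ℂ,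
      HasFDerivAt (fun N => tensorEvalM (n := n) P (Function.update M p N)) D (M p) ∧
      ∀ H, D H = ∑ β ∈ G.support, G.coeff β •
        Matrix.of (fun i j => ∏ l,
          (Function.update (fun l' => M l' ^ β l'.castSucc) p
            (M p ^ β p.castSucc * H * M p ^ β (Fin.last k)) l) (i l) (j l)) := by
  classical
  have key : ∀ P : MvPolynomial (Fin k) ℂ,
      ∃ G0 : MvPolynomial (Fin (k + 1)) ℂ,
        ((X (Fin.last k) - X p.castSucc) * G0 =
          MvPolynomial.aeval
              (fun l : Fin k => if l = p then X (Fin.last k) else X l.castSucc) P -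
            MvPolynomial.rename Fin.castSucc P) ∧
        HasFDerivAt (fun N => tensorEvalM (n := n) P (Function.update M p N))
          (Dmap M p G0) (M p) := by
    intro P
    induction P using MvPolynomial.induction_on' with
    | monomial α c =>
        obtain ⟨G0, h1, h2⟩ := keyMono M p α c
        exact ⟨_, h1, h2⟩
    | add P Q hP hQ =>
        obtain ⟨G1, hG1, hd1⟩ := hP
        obtain ⟨G2, hG2, hd2⟩ := hQ
        refine ⟨G1 + G2, ?_, ?_⟩
        · rw [mul_add, hG1, hG2, map_add, map_add]
          ring
        · have hfun : (fun N => tensorEvalM (n := n) (P + Q) (Function.update M p N)) =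
              fun N => tensorEvalM (n := n) P (Function.update M p N) +
                tensorEvalM (n := n) Q (Function.update M p N) := by
            funext N
            rw [tensorEvalM_eq, tensorEvalM_eq, tensorEvalM_eq, map_add]
          rw [hfun, map_add]
          exact hd1.add hd2
  obtain ⟨G0, hG0, hd⟩ := key P
  have hne : (X (Fin.last k) - X p.castSucc : MvPolynomial (Fin (k + 1)) ℂ) ≠ 0 := by
    refine sub_ne_zero_of_ne fun h => ?_
    exact (Fin.castSucc_lt_last p).ne' (MvPolynomial.X_injective h)
  have hGG : G = G0 := mul_left_cancel₀ hne (hG.trans hG0.symm)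
  refine ⟨Dmap M p G, ?_, fun H => ?_⟩
  · rw [hGG]; exact hd
  · rw [Dmap, polySum_apply]
    simp only [ContinuousLinearMap.coe_sum', Finset.sum_apply, ContinuousLinearMap.coe_smul',
      Pi.smul_apply]
    refine Finset.sum_congr rfl fun β _ => ?_
    rw [Lmap_apply]
end

section
/- Let $n\ge 1$, let $K\ge 0$, and let $f:\mathbb{R}\to\mathbb{R}$ be Lipschitz with constant $K$. For a real symmetric $n\times n$ matrix $A$, let $f(A)$ denote the symmetric matrix obtained by applying $f$ to the eigenvalues of $A$ in a spectral decomposition (the continuous functional calculus: if $A = U D U^{T}$ with $U$ orthogonal and $D$ diagonal with the eigenvalues of $A$, then $f(A) = U f(D) U^{T}$ where $f(D)$ applies $f$ entrywise to the diagonal). Then for all real symmetric $n\times n$ matrices $A$ and $B$, $\|f(A)-f(B)\|_{HS} \le K\,\|A-B\|_{HS}$, where $\|M\|_{HS} = \sqrt{\mathrm{Tr}(M^{T}M)}$ is the Hilbert–Schmidt (Frobenius) norm. -/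
open Matrix

lemma key_trace (n : ℕ) (U V : Matrix (Fin n) (Fin n) ℝ) (d e : Fin n → ℝ)
    (hU : Uᵀ * U = 1) (hV : Vᵀ * V = 1) :
    Matrix.trace ((U * diagonal d * Uᵀ - V * diagonal e * Vᵀ)ᵀ *
        (U * diagonal d * Uᵀ - V * diagonal e * Vᵀ)) =
      ∑ i, ∑ j, ((Uᵀ * V) i j)^2 * (d i - e j)^2 := by
  have hUU : U * Uᵀ = 1 := mul_eq_one_comm.mp hU
  have hVV : V * Vᵀ = 1 := mul_eq_one_comm.mp hV
  set W := Uᵀ * V with hWdef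
  have hWT : Wᵀ = Vᵀ * U := by simp [hWdef]
  have hW1 : Wᵀ * W = 1 := by
    rw [hWT, hWdef, Matrix.mul_assoc, ← Matrix.mul_assoc U, hUU, Matrix.one_mul, hV]
  have hW2 : W * Wᵀ = 1 := mul_eq_one_comm.mp hW1
  have hrow : ∀ i, ∑ j, (W i j)^2 = 1 := by
    intro i
    have := congrArg (fun M => M i i) hW2
    simpa [Matrix.mul_apply, pow_two] using this
  have hcol : ∀ j, ∑ i, (W i j)^2 = 1 := by
    intro j
    have := congrArg (fun M => M j j) hW1
    simpa [Matrix.mul_apply, pow_two] using this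
  have hMt : (U * diagonal d * Uᵀ - V * diagonal e * Vᵀ)ᵀ =
      U * diagonal d * Uᵀ - V * diagonal e * Vᵀ := by
    simp [Matrix.transpose_sub, Matrix.transpose_mul, Matrix.mul_assoc]
  rw [hMt]
  have expand : (U * diagonal d * Uᵀ - V * diagonal e * Vᵀ) *
      (U * diagonal d * Uᵀ - V * diagonal e * Vᵀ) =
      U * (diagonal d * diagonal d) * Uᵀ
        - U * diagonal d * Uᵀ * (V * diagonal e * Vᵀ)
        - V * diagonal e * Vᵀ * (U * diagonal d * Uᵀ)
        + V * (diagonal e * diagonal e) * Vᵀ := by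
    have h1 : U * diagonal d * Uᵀ * (U * diagonal d * Uᵀ) = U * (diagonal d * diagonal d) * Uᵀ := by
      calc U * diagonal d * Uᵀ * (U * diagonal d * Uᵀ)
          = U * diagonal d * (Uᵀ * U) * (diagonal d * Uᵀ) := by
            simp only [Matrix.mul_assoc]
        _ = U * (diagonal d * diagonal d) * Uᵀ := by
            rw [hU]; simp only [Matrix.mul_assoc, Matrix.mul_one, Matrix.one_mul]
    have h2 : V * diagonal e * Vᵀ * (V * diagonal e * Vᵀ) = V * (diagonal e * diagonal e) * Vᵀ := by
      calc V * diagonal e * Vᵀ * (V * diagonal e * Vᵀ)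
          = V * diagonal e * (Vᵀ * V) * (diagonal e * Vᵀ) := by
            simp only [Matrix.mul_assoc]
        _ = V * (diagonal e * diagonal e) * Vᵀ := by
            rw [hV]; simp only [Matrix.mul_assoc, Matrix.mul_one, Matrix.one_mul]
    rw [Matrix.sub_mul, Matrix.mul_sub, Matrix.mul_sub, h1, h2]
    abel
  rw [expand, Matrix.trace_add, Matrix.trace_sub, Matrix.trace_sub]
  have t1 : Matrix.trace (U * (diagonal d * diagonal d) * Uᵀ) = ∑ i, ∑ j, (W i j)^2 * (d i)^2 := by
    rw [Matrix.trace_mul_cycle, ← Matrix.mul_assoc, hU, Matrix.one_mul,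
      Matrix.diagonal_mul_diagonal, Matrix.trace_diagonal]
    refine Finset.sum_congr rfl fun i _ => ?_
    rw [← Finset.sum_mul, hrow i, one_mul, pow_two]
  have t2 : Matrix.trace (V * (diagonal e * diagonal e) * Vᵀ) = ∑ i, ∑ j, (W i j)^2 * (e j)^2 := by
    rw [Matrix.trace_mul_cycle, ← Matrix.mul_assoc, hV, Matrix.one_mul,
      Matrix.diagonal_mul_diagonal, Matrix.trace_diagonal, Finset.sum_comm]
    refine Finset.sum_congr rfl fun j _ => ?_
    rw [← Finset.sum_mul, hcol j, one_mul, pow_two]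
  have cross : Matrix.trace (U * diagonal d * Uᵀ * (V * diagonal e * Vᵀ)) =
      ∑ i, ∑ j, (W i j)^2 * (d i * e j) := by
    have : U * diagonal d * Uᵀ * (V * diagonal e * Vᵀ) =
        U * (diagonal d * W * diagonal e * Wᵀ) * Uᵀ := by
      rw [hWT, hWdef]
      simp only [Matrix.mul_assoc]
      rw [hUU, Matrix.mul_one]
    rw [this, Matrix.trace_mul_cycle, ← Matrix.mul_assoc, hU, Matrix.one_mul]
    rw [Matrix.trace]
    refine Finset.sum_congr rfl fun i _ => ?_
    rw [Matrix.diag]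
    rw [Matrix.mul_apply]
    refine Finset.sum_congr rfl fun j _ => ?_
    rw [Matrix.mul_diagonal, Matrix.diagonal_mul, Matrix.transpose_apply]
    ring
  have cross2 : Matrix.trace (V * diagonal e * Vᵀ * (U * diagonal d * Uᵀ)) =
      ∑ i, ∑ j, (W i j)^2 * (d i * e j) := by
    rw [Matrix.trace_mul_comm, cross]
  rw [t1, t2, cross, cross2]
  simp only [← Finset.sum_sub_distrib, ← Finset.sum_add_distrib]
  exact Finset.sum_congr rfl fun i _ => Finset.sum_congr rfl fun j _ => by ring


/-- If `f : ℝ → ℝ` is `K`-Lipschitz, then the induced map on real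
symmetric matrices (defined through any spectral decomposition
`A = U (diagonal d) Uᵀ`, `f(A) := U (diagonal (f ∘ d)) Uᵀ`) is `K`-Lipschitz for the
Hilbert–Schmidt norm `‖M‖ = √(Tr (Mᵀ M))`. -/
theorem stmt13 (n : ℕ) (hn : 1 ≤ n) (K : ℝ) (hK : 0 ≤ K) (f : ℝ → ℝ)
    (hf : ∀ x y : ℝ, |f x - f y| ≤ K * |x - y|)
    (A B U V : Matrix (Fin n) (Fin n) ℝ) (d e : Fin n → ℝ)
    (hU : Uᵀ * U = 1) (hV : Vᵀ * V = 1)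
    (hA : A = U * diagonal d * Uᵀ) (hB : B = V * diagonal e * Vᵀ)
    (hAsymm : A.IsSymm) (hBsymm : B.IsSymm) :
    Real.sqrt
        (Matrix.trace
          ((U * diagonal (f ∘ d) * Uᵀ - V * diagonal (f ∘ e) * Vᵀ)ᵀ *
            (U * diagonal (f ∘ d) * Uᵀ - V * diagonal (f ∘ e) * Vᵀ))) ≤
      K * Real.sqrt (Matrix.trace ((A - B)ᵀ * (A - B))) := by
  subst hA hB
  rw [key_trace n U V (f ∘ d) (f ∘ e) hU hV, key_trace n U V d e hU hV]
  set W := Uᵀ * V with hWdef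
  have hpt : ∀ i j : Fin n, (W i j)^2 * ((f ∘ d) i - (f ∘ e) j)^2 ≤
      K^2 * ((W i j)^2 * (d i - e j)^2) := by
    intro i j
    have h1 : (f (d i) - f (e j))^2 ≤ (K * |d i - e j|)^2 := by
      rw [← sq_abs (f (d i) - f (e j))]
      exact pow_le_pow_left₀ (abs_nonneg _) (hf (d i) (e j)) 2
    have h2 : (K * |d i - e j|)^2 = K^2 * (d i - e j)^2 := by
      rw [mul_pow, sq_abs]
    calc (W i j)^2 * ((f ∘ d) i - (f ∘ e) j)^2
        ≤ (W i j)^2 * (K^2 * (d i - e j)^2) := by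
          exact mul_le_mul_of_nonneg_left (h2 ▸ h1) (sq_nonneg _)
      _ = K^2 * ((W i j)^2 * (d i - e j)^2) := by ring
  have hsum : ∑ i, ∑ j, (W i j)^2 * ((f ∘ d) i - (f ∘ e) j)^2 ≤
      K^2 * ∑ i, ∑ j, (W i j)^2 * (d i - e j)^2 := by
    rw [Finset.mul_sum]
    refine Finset.sum_le_sum fun i _ => ?_
    rw [Finset.mul_sum]
    exact Finset.sum_le_sum fun j _ => hpt i j
  calc Real.sqrt (∑ i, ∑ j, (W i j)^2 * ((f ∘ d) i - (f ∘ e) j)^2)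
      ≤ Real.sqrt (K^2 * ∑ i, ∑ j, (W i j)^2 * (d i - e j)^2) :=
        Real.sqrt_le_sqrt hsum
    _ = K * Real.sqrt (∑ i, ∑ j, (W i j)^2 * (d i - e j)^2) := by
        rw [Real.sqrt_mul (sq_nonneg K), Real.sqrt_sq hK]
end

section
/- Let $d\ge 1$, let $M$ be a $d\times d$ complex matrix, and let $\lambda_1,\ldots,\lambda_d$ be the eigenvalues of $M$ listed with algebraic multiplicity (the roots of the characteristic polynomial of $M$). Let $k\ge 1$, let $P\in\mathbb{C}[x_1,\ldots,x_k]$, and let $\sigma$ be a permutation of $\{1,\ldots,k\}$ with orbits $\omega_1,\ldots,\omega_{\Omega}$; for $1\le l\le k$ let $c(l)$ be the index of the orbit containing $l$. Then $\mathrm{Tr}\big(P^{\otimes}(M,\ldots,M)\circ \Pi_{\sigma}\big) = \sum_{(n_1,\ldots,n_{\Omega})\in\{1,\ldots,d\}^{\Omega}} P(\lambda_{n_{c(1)}},\ldots,\lambda_{n_{c(k)}})$, where $\Pi_\sigma$ is the endomorphism of $(\mathbb{C}^d)^{\otimes k}$ determined by $\Pi_\sigma(v_1\otimes\cdots\otimes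 v_k) = v_{\sigma^{-1}(1)}\otimes\cdots\otimes v_{\sigma^{-1}(k)}$. -/
open Polynomial

/-- The matrix of the permutation operator `Π_σ` on `(ℂ^d)^{⊗ k}`,
`Π_σ (v₁ ⊗ ⋯ ⊗ v_k) = v_{σ⁻¹(1)} ⊗ ⋯ ⊗ v_{σ⁻¹(k)}`. -/
def permOp (d k : ℕ) (σ : Equiv.Perm (Fin k)) :
    Matrix (Fin k → Fin d) (Fin k → Fin d) ℂ :=
  Matrix.of fun i j => if j = i ∘ σ then 1 else 0


lemma prodNeg {d : ℕ} (f : Fin d → ℂ) : ∏ i, (-(f i)) = (-1 : ℂ) ^ d * ∏ i, f i := by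
  have : ∀ i : Fin d, -(f i) = (-1 : ℂ) * f i := fun i => by ring
  simp only [this, Finset.prod_mul_distrib, Finset.prod_const, Finset.card_univ, Fintype.card_fin]

lemma evalCharpoly {n : Type*} [Fintype n] [DecidableEq n] (A : Matrix n n ℂ) (r : ℂ) :
    A.charpoly.eval r = (r • (1 : Matrix n n ℂ) - A).det := by
  rw [Matrix.charpoly, ← Polynomial.coe_evalRingHom, RingHom.map_det]
  congr 1
  ext i j
  by_cases h : i = j <;>
    simp [Matrix.charmatrix_apply, h, Matrix.one_apply, Matrix.diagonal_apply]

lemma listSwap {d : ℕ} (L : List ℂ) (f : Fin d → ℂ → ℂ) :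
    (L.map (fun r => ∏ i, f i r)).prod = ∏ i, (L.map (f i)).prod := by
  induction L with
  | nil => simp
  | cons a L ih => simp [ih, Finset.prod_mul_distrib]

lemma charpolyPow {d : ℕ} (M : Matrix (Fin d) (Fin d) ℂ) (lam : Fin d → ℂ)
    (hlam : M.charpoly = ∏ i, (X - C (lam i))) (p : ℕ) (hp : p ≠ 0) :
    (M ^ p).charpoly = ∏ i, (X - C (lam i ^ p)) := by
  have hMdet : ∀ a : ℂ, (M - a • 1).det = ∏ i, (lam i - a) := by
    intro a
    have h1 : M - a • 1 = -(a • (1 : Matrix (Fin d) (Fin d) ℂ) - M) := by rw [neg_sub]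
    rw [h1, Matrix.det_neg, ← evalCharpoly, hlam, Polynomial.eval_prod]
    simp only [Polynomial.eval_sub, Polynomial.eval_X, Polynomial.eval_C, Fintype.card_fin]
    rw [← prodNeg]
    simp [neg_sub]
  apply Polynomial.funext
  intro x
  have h1 : Polynomial.eval x (∏ i, (X - C (lam i ^ p))) = ∏ i, (x - lam i ^ p) := by
    simp [Polynomial.eval_prod]
  rw [h1, evalCharpoly]
  set q : ℂ[X] := X ^ p - C x with hq
  have hqm : q.Monic := Polynomial.monic_X_pow_sub_C x hp
  have hqs : q.Splits := IsAlgClosed.splits q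
  have hfact : q = (q.roots.map (fun a => X - C a)).prod :=
    (hqs.eq_prod_roots_of_monic hqm)
  set L := q.roots.toList with hL
  have hfactL : q = (L.map (fun a => X - C a)).prod := by
    rw [hfact]
    rw [← Multiset.coe_toList q.roots, Multiset.map_coe, Multiset.prod_coe]
  have haev : M ^ p - x • 1 = (L.map (fun a => M - a • 1)).prod := by
    have h2 := congrArg (Polynomial.aeval M) hfactL
    rw [map_sub, map_pow, Polynomial.aeval_X, Polynomial.aeval_C,
      Algebra.algebraMap_eq_smul_one] at h2
    rw [h2, map_list_prod (Polynomial.aeval M : ℂ[X] →ₐ[ℂ] Matrix (Fin d) (Fin d) ℂ)]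
    rw [List.map_map]
    have hfun : ((Polynomial.aeval M : ℂ[X] →ₐ[ℂ] Matrix (Fin d) (Fin d) ℂ) ∘ fun a => X - C a)
        = fun a : ℂ => M - a • 1 := by
      funext a
      simp [Algebra.algebraMap_eq_smul_one]
    rw [hfun]
  have hqeval : ∀ y : ℂ, (L.map (fun a => y - a)).prod = y ^ p - x := by
    intro y
    have h3 := congrArg (Polynomial.eval y) hfactL
    rw [Polynomial.eval_sub, Polynomial.eval_pow, Polynomial.eval_X, Polynomial.eval_C,
      Polynomial.eval_list_prod, List.map_map] at h3
    have hfun : (Polynomial.eval y ∘ fun a => X - C a) = fun a : ℂ => y - a := by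
      funext a; simp
    rw [hfun] at h3
    exact h3.symm
  have hdet : (M ^ p - x • 1).det = ∏ i, (lam i ^ p - x) := by
    rw [haev]
    have h5 := map_list_prod (Matrix.detMonoidHom : Matrix (Fin d) (Fin d) ℂ →* ℂ) (L.map (fun a => M - a • 1))
    simp only [Matrix.coe_detMonoidHom] at h5
    rw [h5, List.map_map]
    have hfun : (Matrix.det ∘ fun a : ℂ => M - a • 1) = fun a : ℂ => ∏ i, (lam i - a) := by
      funext a
      simpa using hMdet a
    rw [hfun, listSwap]
    congr 1
    ext i : 1
    exact hqeval (lam i)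
  have h4 : x • (1 : Matrix (Fin d) (Fin d) ℂ) - M ^ p = -(M ^ p - x • 1) := by rw [neg_sub]
  rw [h4, Matrix.det_neg, hdet, Fintype.card_fin, ← prodNeg]
  simp [neg_sub]

lemma tracePow {d : ℕ} (M : Matrix (Fin d) (Fin d) ℂ) (lam : Fin d → ℂ)
    (hlam : M.charpoly = ∏ i, (X - C (lam i))) (p : ℕ) :
    Matrix.trace (M ^ p) = ∑ i, lam i ^ p := by
  rcases Nat.eq_zero_or_pos p with hp | hp
  · subst hp
    simp [Matrix.trace_one]
  · rw [Matrix.trace_eq_sum_roots_charpoly, charpolyPow M lam hlam p hp.ne']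
    have : (∏ i, (X - C (lam i ^ p))) =
        ((Finset.univ.val.map (fun i => lam i ^ p)).map (fun a => X - C a)).prod := by
      rw [Multiset.map_map, Finset.prod_eq_multiset_prod]
      rfl
    rw [this, Polynomial.roots_multiset_prod_X_sub_C]
    rw [Finset.sum_eq_multiset_sum]

variable {d : ℕ} (M : Matrix (Fin d) (Fin d) ℂ)

lemma pathLemma (m : ℕ) (γ : Fin m → ℕ) (x : Fin d) (φ : Fin d → ℂ) :
    ∑ w : Fin m → Fin d,
      (∏ j : Fin m, (M ^ γ j) ((Fin.cons x w : Fin (m+1) → Fin d) j.succ)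
          ((Fin.cons x w : Fin (m+1) → Fin d) j.castSucc))
        * φ ((Fin.cons x w : Fin (m+1) → Fin d) (Fin.last m)) =
    ∑ y, (M ^ ∑ j, γ j) y x * φ y := by
  induction m generalizing x with
  | zero =>
    simp [Matrix.one_apply]
  | succ m ih =>
    rw [← Equiv.sum_comp (Fin.consEquiv (fun _ : Fin (m+1) => Fin d))]
    rw [Fintype.sum_prod_type]
    have hterm : ∀ (z : Fin d) (w : Fin m → Fin d),
        (∏ j : Fin (m + 1), (M ^ γ j) ((Fin.cons x (Fin.cons z w) : Fin (m+2) → Fin d) j.succ)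
            ((Fin.cons x (Fin.cons z w) : Fin (m+2) → Fin d) j.castSucc))
          * φ ((Fin.cons x (Fin.cons z w) : Fin (m+2) → Fin d) (Fin.last (m + 1)))
        = (M ^ γ 0) z x *
          ((∏ j : Fin m, (M ^ (γ ∘ Fin.succ) j) ((Fin.cons z w : Fin (m+1) → Fin d) j.succ) ((Fin.cons z w : Fin (m+1) → Fin d) j.castSucc))
            * φ ((Fin.cons z w : Fin (m+1) → Fin d) (Fin.last m))) := by
      intro z w
      rw [Fin.prod_univ_succ]
      have h0 : ((Fin.cons x (Fin.cons z w) : Fin (m+2) → Fin d) (Fin.succ 0) : Fin d) = z := by simp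
      have h0' : ((Fin.cons x (Fin.cons z w) : Fin (m+2) → Fin d) (Fin.castSucc 0) : Fin d) = x := by simp
      have hs : ∀ j : Fin m,
          (M ^ γ j.succ) ((Fin.cons x (Fin.cons z w) : Fin (m+2) → Fin d) j.succ.succ)
              ((Fin.cons x (Fin.cons z w) : Fin (m+2) → Fin d) j.succ.castSucc)
          = (M ^ (γ ∘ Fin.succ) j) ((Fin.cons z w : Fin (m+1) → Fin d) j.succ) ((Fin.cons z w : Fin (m+1) → Fin d) j.castSucc) := by
        intro j
        have e1 : ((Fin.cons x (Fin.cons z w) : Fin (m+2) → Fin d) j.succ.succ : Fin d) = (Fin.cons z w : Fin (m+1) → Fin d) j.succ := by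
          rw [Fin.cons_succ]
        have e2 : ((Fin.cons x (Fin.cons z w) : Fin (m+2) → Fin d) j.succ.castSucc : Fin d)
            = (Fin.cons z w : Fin (m+1) → Fin d) j.castSucc := by
          rw [← Fin.succ_castSucc, Fin.cons_succ]
        rw [e1, e2]
        rfl
      have hlast : ((Fin.cons x (Fin.cons z w) : Fin (m+2) → Fin d) (Fin.last (m + 1)) : Fin d)
          = (Fin.cons z w : Fin (m+1) → Fin d) (Fin.last m) := by
        rw [← Fin.succ_last, Fin.cons_succ]
      rw [h0, h0', hlast]
      rw [Finset.prod_congr rfl (fun j _ => hs j)]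
      ring
    have : ∀ p : Fin d × (Fin m → Fin d),
        (∏ j : Fin (m+1), (M ^ γ j) ((Fin.cons x ((Fin.consEquiv (fun _ : Fin (m+1) => Fin d)) p) : Fin (m+2) → Fin d) j.succ)
          ((Fin.cons x ((Fin.consEquiv (fun _ : Fin (m+1) => Fin d)) p) : Fin (m+2) → Fin d) j.castSucc))
          * φ ((Fin.cons x ((Fin.consEquiv (fun _ : Fin (m+1) => Fin d)) p) : Fin (m+2) → Fin d) (Fin.last (m+1)))
        = (M ^ γ 0) p.1 x *
          ((∏ j : Fin m, (M ^ (γ ∘ Fin.succ) j) ((Fin.cons p.1 p.2 : Fin (m+1) → Fin d) j.succ)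
              ((Fin.cons p.1 p.2 : Fin (m+1) → Fin d) j.castSucc)) * φ ((Fin.cons p.1 p.2 : Fin (m+1) → Fin d) (Fin.last m))) := by
      rintro ⟨z, w⟩
      exact hterm z w
    calc ∑ z : Fin d, ∑ w : Fin m → Fin d, _ = ∑ z : Fin d, (M ^ γ 0) z x *
          ∑ w : Fin m → Fin d,
            ((∏ j : Fin m, (M ^ (γ ∘ Fin.succ) j) ((Fin.cons z w : Fin (m+1) → Fin d) j.succ) ((Fin.cons z w : Fin (m+1) → Fin d) j.castSucc))
              * φ ((Fin.cons z w : Fin (m+1) → Fin d) (Fin.last m))) := by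
            refine Finset.sum_congr rfl fun z _ => ?_
            rw [Finset.mul_sum]
            exact Finset.sum_congr rfl fun w _ => this (z, w)
      _ = ∑ z : Fin d, (M ^ γ 0) z x * ∑ y, (M ^ ∑ j, (γ ∘ Fin.succ) j) y z * φ y := by
            refine Finset.sum_congr rfl fun z _ => ?_
            rw [ih (γ ∘ Fin.succ) z]
      _ = ∑ y, (M ^ ∑ j, γ j) y x * φ y := by
            simp_rw [Finset.mul_sum]
            rw [Finset.sum_comm]
            refine Finset.sum_congr rfl fun y _ => ?_
            have : (∑ j : Fin (m+1), γ j) = (∑ j, (γ ∘ Fin.succ) j) + γ 0 := by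
              rw [Fin.sum_univ_succ]
              simp only [Function.comp_def]
              exact Nat.add_comm _ _
            rw [this, pow_add, Matrix.mul_apply, Finset.sum_mul]
            refine Finset.sum_congr rfl fun z _ => ?_
            ring

lemma cons_castSucc_eq_sub_one {m : ℕ} (w : Fin (m+1) → Fin d) (j : Fin (m+1)) :
    (Fin.cons (w (Fin.last m)) w : Fin (m+2) → Fin d) j.castSucc = w (j - 1) := by
  refine Fin.cases ?_ ?_ j
  · have h : (0 : Fin (m+1)) - 1 = Fin.last m := by
      ext
      rw [Fin.coe_sub_one]
      simp
    rw [h]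
    simp
  · intro i
    have h : i.succ - 1 = i.castSucc := by
      ext
      rw [Fin.coe_sub_one, if_neg (Fin.succ_ne_zero i)]
      simp
    rw [h, ← Fin.succ_castSucc, Fin.cons_succ]

lemma chainLemma (m : ℕ) (γ : Fin (m+1) → ℕ) :
    ∑ v : Fin (m+1) → Fin d, ∏ j : Fin (m+1), (M ^ γ j) (v j) (v (j - 1)) =
    Matrix.trace (M ^ ∑ j, γ j) := by
  have key : ∀ x : Fin d,
      ∑ w : Fin (m+1) → Fin d,
        (∏ j : Fin (m+1), (M ^ γ j) ((Fin.cons x w : Fin (m+2) → Fin d) j.succ)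
            ((Fin.cons x w : Fin (m+2) → Fin d) j.castSucc))
          * (if (Fin.cons x w : Fin (m+2) → Fin d) (Fin.last (m+1)) = x then (1:ℂ) else 0)
        = (M ^ ∑ j, γ j) x x := by
    intro x
    rw [pathLemma M (m+1) γ x (fun y => if y = x then (1:ℂ) else 0)]
    rw [Finset.sum_congr rfl (fun y _ => mul_ite (y = x) ((M ^ ∑ j, γ j) y x) (1:ℂ) 0)]
    simp
  have htr : Matrix.trace (M ^ ∑ j, γ j) = ∑ x, (M ^ ∑ j, γ j) x x := by
    simp [Matrix.trace, Matrix.diag]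
  rw [htr, ← Finset.sum_congr rfl (fun x _ => key x)]
  rw [Finset.sum_comm]
  refine Finset.sum_congr rfl fun w _ => ?_
  symm
  have hlast : ∀ x : Fin d, (Fin.cons x w : Fin (m+2) → Fin d) (Fin.last (m+1)) = w (Fin.last m) := by
    intro x
    rw [← Fin.succ_last, Fin.cons_succ]
  calc ∑ x : Fin d, (∏ j : Fin (m+1), (M ^ γ j) ((Fin.cons x w : Fin (m+2) → Fin d) j.succ)
            ((Fin.cons x w : Fin (m+2) → Fin d) j.castSucc))
          * (if (Fin.cons x w : Fin (m+2) → Fin d) (Fin.last (m+1)) = x then (1:ℂ) else 0)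
      = ∑ x : Fin d, (if x = w (Fin.last m) then (1:ℂ) else 0) *
          (∏ j : Fin (m+1), (M ^ γ j) ((Fin.cons x w : Fin (m+2) → Fin d) j.succ)
            ((Fin.cons x w : Fin (m+2) → Fin d) j.castSucc)) := by
        refine Finset.sum_congr rfl fun x _ => ?_
        rw [hlast x]
        rw [mul_comm]
        congr 1
        by_cases h : x = w (Fin.last m)
        · simp [h]
        · simp [h, Ne.symm h]
    _ = ∏ j : Fin (m+1), (M ^ γ j) (w j) (w (j - 1)) := by
        simp only [ite_mul, one_mul, zero_mul]
        rw [Finset.sum_ite_eq' Finset.univ (w (Fin.last m))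
          (fun x => (∏ j : Fin (m+1), (M ^ γ j) ((Fin.cons x w : Fin (m+2) → Fin d) j.succ)
            ((Fin.cons x w : Fin (m+2) → Fin d) j.castSucc)))]
        simp only [Finset.mem_univ, if_true]
        refine Finset.prod_congr rfl fun j _ => ?_
        rw [Fin.cons_succ, cons_castSucc_eq_sub_one]

lemma cycLemma {ι : Type*} [Fintype ι] [DecidableEq ι] [Nonempty ι] (π : Equiv.Perm ι)
    (ht : ∀ a b2 : ι, ∃ n : ℕ, (π ^ n) a = b2) (β : ι → ℕ) :
    ∑ g : ι → Fin d, ∏ l, (M ^ β l) (g l) (g (π⁻¹ l)) = Matrix.trace (M ^ ∑ l, β l) := by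
  classical
  obtain ⟨b⟩ := ‹Nonempty ι›
  have hcoe : ∀ n : ℕ, ⇑(π ^ n) = (⇑π)^[n] := fun n => Equiv.Perm.coe_pow π n
  have hper : b ∈ Function.periodicPts ⇑π := by
    refine ⟨orderOf π, orderOf_pos π, ?_⟩
    show (⇑π)^[orderOf π] b = b
    rw [← hcoe, pow_orderOf_eq_one]
    rfl
  obtain ⟨m', hm'⟩ : ∃ m', Function.minimalPeriod ⇑π b = m' + 1 :=
    ⟨Function.minimalPeriod ⇑π b - 1, by
      have := Function.minimalPeriod_pos_of_mem_periodicPts hper; omega⟩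
  have hm : 0 < m' + 1 := Nat.succ_pos m'
  have hmb : (π ^ (m' + 1)) b = b := by
    rw [hcoe, ← hm']
    exact Function.isPeriodicPt_minimalPeriod ⇑π b
  have hmod : ∀ n : ℕ, (π ^ (n % (m' + 1))) b = (π ^ n) b := by
    intro n
    rw [hcoe, hcoe, ← hm']
    exact Function.iterate_mod_minimalPeriod_eq
  set e : Fin (m' + 1) → ι := fun j => (π ^ (j : ℕ)) b with hedef
  have hinj : Function.Injective e := by
    intro j1 j2 h
    refine Fin.ext ?_
    refine Function.iterate_injOn_Iio_minimalPeriod (f := ⇑π) (x := b) ?_ ?_ ?_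
    · exact Set.mem_Iio.mpr (by rw [hm']; exact j1.isLt)
    · exact Set.mem_Iio.mpr (by rw [hm']; exact j2.isLt)
    · show (⇑π)^[(j1 : ℕ)] b = (⇑π)^[(j2 : ℕ)] b
      rw [← hcoe, ← hcoe]
      exact h
  have hsurj : Function.Surjective e := by
    intro l
    obtain ⟨n, hn⟩ := ht b l
    refine ⟨⟨n % (m' + 1), Nat.mod_lt _ hm⟩, ?_⟩
    show (π ^ (n % (m' + 1))) b = l
    rw [hmod n]
    exact hn
  set E : Fin (m' + 1) ≃ ι := Equiv.ofBijective e ⟨hinj, hsurj⟩ with hEdef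
  have hE : ∀ j, E j = e j := fun j => rfl
  have hkey : ∀ j : Fin (m' + 1), π⁻¹ (e j) = e (j - 1) := by
    intro j
    have hstep : π (e (j - 1)) = e j := by
      show π ((π ^ ((j - 1 : Fin (m' + 1)) : ℕ)) b) = (π ^ (j : ℕ)) b
      have hcomp : ∀ t : ℕ, π ((π ^ t) b) = (π ^ (t + 1)) b := by
        intro t
        rw [pow_succ']
        rfl
      rw [hcomp]
      by_cases h0 : j = 0
      · subst h0
        have hv : ((0 : Fin (m' + 1)) - 1 : Fin (m' + 1)).val = m' := by
          rw [Fin.coe_sub_one]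
          simp
        rw [hv]
        simpa using hmb
      · have hj1 : 1 ≤ (j : ℕ) := Nat.pos_of_ne_zero (fun hh => h0 (Fin.ext hh))
        have hv : ((j : Fin (m' + 1)) - 1 : Fin (m' + 1)).val = (j : ℕ) - 1 := by
          rw [Fin.coe_sub_one, if_neg h0]
        rw [hv]
        have hexp : (j : ℕ) - 1 + 1 = (j : ℕ) := by omega
        rw [hexp]
    rw [← hstep]
    simp
  set D : (Fin (m' + 1) → Fin d) ≃ (ι → Fin d) := Equiv.arrowCongr E (Equiv.refl (Fin d))
    with hDdef
  rw [← Equiv.sum_comp D (fun g => ∏ l, (M ^ β l) (g l) (g (π⁻¹ l)))]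
  have hDv : ∀ (v : Fin (m' + 1) → Fin d) (l : ι), D v l = v (E.symm l) := fun v l => rfl
  have hterm : ∀ v : Fin (m' + 1) → Fin d,
      (∏ l, (M ^ β l) (D v l) (D v (π⁻¹ l)))
      = ∏ j : Fin (m' + 1), (M ^ (β ∘ e) j) (v j) (v (j - 1)) := by
    intro v
    rw [← Equiv.prod_comp E (fun l => (M ^ β l) (D v l) (D v (π⁻¹ l)))]
    refine Finset.prod_congr rfl fun j _ => ?_
    have hsymm : ∀ i : Fin (m' + 1), E.symm (e i) = i := fun i => by
      rw [← hE]; exact Equiv.symm_apply_apply E i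
    rw [hDv, hDv]
    have hEj : E j = e j := hE j
    rw [hEj, hsymm, hkey j, hsymm]
    rfl
  rw [Finset.sum_congr rfl (fun v _ => hterm v)]
  rw [chainLemma M m' (β ∘ e)]
  have hsum : ∑ j, (β ∘ e) j = ∑ l, β l := by
    exact Equiv.sum_comp E β
  rw [hsum]

lemma keyLemma {d k Ω : ℕ} (M : Matrix (Fin d) (Fin d) ℂ) (lam : Fin d → ℂ)
    (hlam : M.charpoly = ∏ i, (X - C (lam i)))
    (σ : Equiv.Perm (Fin k)) (c : Fin k → Fin Ω)
    (hc : ∀ l l', c l = c l' ↔ σ.SameCycle l l') (hcsurj : Function.Surjective c)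
    (β : Fin k → ℕ) :
    ∑ i : Fin k → Fin d, ∏ l, (M ^ β l) (i l) (i (σ⁻¹ l)) =
    ∑ mm : Fin Ω → Fin d, ∏ l, lam (mm (c l)) ^ β l := by
  classical
  have hcσ : ∀ l, c (σ l) = c l := fun l => ((hc (σ l) l).mpr ⟨-1, by simp⟩)
  have hfiber : ∀ ω : Fin Ω, Nonempty {l // c l = ω} := fun ω => by
    obtain ⟨l, hl⟩ := hcsurj ω; exact ⟨⟨l, hl⟩⟩
  have hmem : ∀ (ω : Fin Ω) (l : Fin k), c (σ l) = ω ↔ c l = ω := fun ω l => by rw [hcσ]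
  let πω : ∀ ω : Fin Ω, Equiv.Perm {l // c l = ω} := fun ω => σ.subtypePerm (hmem ω)
  have hπinv : ∀ (ω : Fin Ω) (l : {l // c l = ω}), (((πω ω)⁻¹ l : {l // c l = ω}) : Fin k)
      = σ⁻¹ (l : Fin k) := fun ω l => rfl
  have htrans : ∀ (ω : Fin Ω) (a b2 : {l // c l = ω}), ∃ n : ℕ, ((πω ω) ^ n) a = b2 := by
    intro ω a b2
    have hsc : σ.SameCycle a.1 b2.1 := (hc _ _).mp (a.2.trans b2.2.symm)
    obtain ⟨n, _, hn⟩ := hsc.exists_pow_eq'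
    refine ⟨n, ?_⟩
    show ((σ.subtypePerm (hmem ω)) ^ n) a = b2
    rw [Equiv.Perm.subtypePerm_pow σ n (hmem ω)]
    exact Subtype.ext (by simpa using hn)
  -- the A-values
  set A : Fin Ω → ℕ := fun ω => ∑ t : {l // c l = ω}, β t.1 with hAdef
  have gcast : ∀ (g : ∀ ω : Fin Ω, {l // c l = ω} → Fin d) (a : Fin k) (ω : Fin Ω)
      (h : c a = ω), g (c a) ⟨a, rfl⟩ = g ω ⟨a, h⟩ := by
    intro g a ω h
    subst h
    rfl
  -- LHS
  have hLHS : ∑ i : Fin k → Fin d, ∏ l, (M ^ β l) (i l) (i (σ⁻¹ l))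
      = ∏ ω : Fin Ω, Matrix.trace (M ^ A ω) := by
    let Epi : (∀ ω : Fin Ω, {l // c l = ω} → Fin d) ≃ (Fin k → Fin d) :=
      { toFun := fun g l => g (c l) ⟨l, rfl⟩
        invFun := fun i ω l => i l.1
        left_inv := by
          intro g
          funext ω l
          obtain ⟨l, hl⟩ := l
          exact gcast g l ω hl
        right_inv := fun i => rfl }
    rw [← Equiv.sum_comp Epi (fun i => ∏ l, (M ^ β l) (i l) (i (σ⁻¹ l)))]
    have hterm : ∀ g : ∀ ω : Fin Ω, {l // c l = ω} → Fin d,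
        (∏ l, (M ^ β l) (Epi g l) (Epi g (σ⁻¹ l)))
        = ∏ ω : Fin Ω, ∏ t : {l // c l = ω}, (M ^ β t.1) (g ω t) (g ω ((πω ω)⁻¹ t)) := by
      intro g
      rw [← Equiv.prod_comp (Equiv.sigmaFiberEquiv c)
        (fun l => (M ^ β l) (Epi g l) (Epi g (σ⁻¹ l)))]
      rw [← Finset.univ_sigma_univ, Finset.prod_sigma]
      refine Finset.prod_congr rfl fun ω _ => Finset.prod_congr rfl fun t _ => ?_
      obtain ⟨l, hl⟩ := t
      have h1 : Epi g l = g ω ⟨l, hl⟩ := gcast g l ω hl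
      have hσl : c (σ⁻¹ l) = ω := by
        have := hcσ (σ⁻¹ l)
        rw [← Equiv.Perm.mul_apply, mul_inv_cancel, Equiv.Perm.one_apply] at this
        exact this.symm.trans hl
      have h2 : Epi g (σ⁻¹ l) = g ω ⟨σ⁻¹ l, hσl⟩ := gcast g (σ⁻¹ l) ω hσl
      have h3 : (πω ω)⁻¹ ⟨l, hl⟩ = ⟨σ⁻¹ l, hσl⟩ := Subtype.ext (hπinv ω ⟨l, hl⟩)
      have h4 : (Equiv.sigmaFiberEquiv c) ⟨ω, ⟨l, hl⟩⟩ = l := rfl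
      rw [h4, h1, h2, h3]
    rw [Finset.sum_congr rfl (fun g _ => hterm g)]
    rw [← Fintype.prod_sum
      (fun (ω : Fin Ω) (h : {l // c l = ω} → Fin d) =>
        ∏ t : {l // c l = ω}, (M ^ β t.1) (h t) (h ((πω ω)⁻¹ t)))]
    refine Finset.prod_congr rfl fun ω _ => ?_
    have := hfiber ω
    exact cycLemma M (πω ω) (htrans ω) (fun t => β t.1)
  -- RHS
  have hRHS : ∑ mm : Fin Ω → Fin d, ∏ l, lam (mm (c l)) ^ β l
      = ∏ ω : Fin Ω, Matrix.trace (M ^ A ω) := by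
    have hterm : ∀ mm : Fin Ω → Fin d,
        (∏ l, lam (mm (c l)) ^ β l) = ∏ ω : Fin Ω, lam (mm ω) ^ A ω := by
      intro mm
      rw [← Equiv.prod_comp (Equiv.sigmaFiberEquiv c) (fun l => lam (mm (c l)) ^ β l)]
      rw [← Finset.univ_sigma_univ, Finset.prod_sigma]
      refine Finset.prod_congr rfl fun ω _ => ?_
      rw [hAdef, ← Finset.prod_pow_eq_pow_sum]
      refine Finset.prod_congr rfl fun t _ => ?_
      obtain ⟨l, hl⟩ := t
      have h4 : (Equiv.sigmaFiberEquiv c) ⟨ω, ⟨l, hl⟩⟩ = l := rfl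
      rw [h4, hl]
    rw [Finset.sum_congr rfl (fun mm _ => hterm mm)]
    rw [← Fintype.prod_sum (fun (ω : Fin Ω) (x : Fin d) => lam x ^ A ω)]
    refine Finset.prod_congr rfl fun ω _ => ?_
    exact (tracePow M lam hlam (A ω)).symm
  rw [hLHS, hRHS]

theorem stmt17 (d : ℕ) (hd : 1 ≤ d) (M : Matrix (Fin d) (Fin d) ℂ)
    (lam : Fin d → ℂ) (hlam : M.charpoly = ∏ i, (X - C (lam i)))
    (k : ℕ) (hk : 1 ≤ k) (P : MvPolynomial (Fin k) ℂ)
    (σ : Equiv.Perm (Fin k)) (Ω : ℕ) (c : Fin k → Fin Ω)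
    (hc : ∀ l l', c l = c l' ↔ σ.SameCycle l l')
    (hcsurj : Function.Surjective c) :
    Matrix.trace
        (tensorEvalM (n := fun _ : Fin k => d) P (fun _ => M) * permOp d k σ) =
      ∑ m : Fin Ω → Fin d, MvPolynomial.eval (fun l => lam (m (c l))) P := by
  classical
  have h1 : ∀ (A : Matrix (Fin k → Fin d) (Fin k → Fin d) ℂ) (i : Fin k → Fin d),
      (A * permOp d k σ) i i = A i (i ∘ ⇑σ⁻¹) := by
    intro A i
    rw [Matrix.mul_apply]
    have hp : ∀ j : Fin k → Fin d, permOp d k σ j i = if j = i ∘ ⇑σ⁻¹ then (1:ℂ) else 0 := by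
      intro j
      show (if i = j ∘ ⇑σ then (1:ℂ) else 0) = _
      congr 1
      refine propext ⟨fun h => ?_, fun h => ?_⟩
      · subst h
        funext l
        simp
      · subst h
        funext l
        simp
    simp_rw [hp, mul_ite, mul_one, mul_zero]
    rw [Finset.sum_ite_eq' Finset.univ (i ∘ ⇑σ⁻¹) (fun j => A i j)]
    simp
  have h2 : ∀ i j : Fin k → Fin d,
      tensorEvalM (n := fun _ : Fin k => d) P (fun _ => M) i j
      = ∑ α ∈ P.support, P.coeff α * ∏ l, (M ^ α l) (i l) (j l) := by
    intro i j
    rw [tensorEvalM]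
    rw [Matrix.sum_apply]
    refine Finset.sum_congr rfl fun α _ => ?_
    simp
  have htr : Matrix.trace (tensorEvalM (n := fun _ : Fin k => d) P (fun _ => M) * permOp d k σ)
      = ∑ i : Fin k → Fin d, ∑ α ∈ P.support, P.coeff α * ∏ l, (M ^ α l) (i l) (i (σ⁻¹ l)) := by
    rw [Matrix.trace]
    refine Finset.sum_congr rfl fun i _ => ?_
    rw [Matrix.diag_apply, h1, h2]
    rfl
  rw [htr]
  have hrhs : ∀ mm : Fin Ω → Fin d,
      MvPolynomial.eval (fun l => lam (mm (c l))) P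
      = ∑ α ∈ P.support, P.coeff α * ∏ l, lam (mm (c l)) ^ α l := by
    intro mm
    rw [MvPolynomial.eval_eq']
  have hswap1 : (∑ i : Fin k → Fin d, ∑ α ∈ P.support,
        P.coeff α * ∏ l, (M ^ α l) (i l) (i (σ⁻¹ l)))
      = ∑ α ∈ P.support, ∑ i : Fin k → Fin d,
        P.coeff α * ∏ l, (M ^ α l) (i l) (i (σ⁻¹ l)) := Finset.sum_comm
  have hswap2 : (∑ mm : Fin Ω → Fin d, ∑ α ∈ P.support,
        P.coeff α * ∏ l, lam (mm (c l)) ^ α l)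
      = ∑ α ∈ P.support, ∑ mm : Fin Ω → Fin d,
        P.coeff α * ∏ l, lam (mm (c l)) ^ α l := Finset.sum_comm
  rw [Finset.sum_congr rfl (fun mm _ => hrhs mm), hswap2, hswap1]
  refine Finset.sum_congr rfl fun α _ => ?_
  rw [← Finset.mul_sum, ← Finset.mul_sum]
  congr 1
  exact keyLemma M lam hlam σ c hc hcsurj (fun l => α l)
end
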